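/- arXiv:2003.00518 — 7 statements merged into one kernel-verified Lean document; each statement's English description precedes it below -/
import Mathlib

section
/- Let L be a set of n distinct non-vertical lines in general position except that parallel lines are allowed. Suppose the k-upper level L↑_k (the x-monotone polygonal curve consisting of points with exactly k lines of L strictly above them) has at least two vertices, and every vertex of L↑_k is also a vertex of L↑_{k+1}. Then, writing V_j for the number of vertices of L↑_j, we have V_{k+1} ≥ 2·V_k − 1. -/
open Finset
open scoped Classical

noncomputable section

/-- A non-vertical line `y = a x + b` in the plane is represented by the pair `(a, b)`;
a point is a pair `(x, y)`. -/
def evalLine (l : ℝ × ℝ) (x : ℝ) : ℝ := l.1 * x + l.2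

/-- The line `l` passes strictly below the point `p`. -/
def Below (l : ℝ × ℝ) (p : ℝ × ℝ) : Prop := evalLine l p.1 < p.2

/-- The line `l` passes strictly above the point `p`. -/
def Above (l : ℝ × ℝ) (p : ℝ × ℝ) : Prop := p.2 < evalLine l p.1

/-- The point `p` lies on the line `l`. -/
def OnLine (l : ℝ × ℝ) (p : ℝ × ℝ) : Prop := evalLine l p.1 = p.2

/-- The level of a point: number of lines of `L` strictly below it. -/
def levelCount (L : Finset (ℝ × ℝ)) (p : ℝ × ℝ) : ℕ :=
  (L.filter (fun l => Below l p)).card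

/-- The upper level of a point: number of lines of `L` strictly above it. -/
def upperCount (L : Finset (ℝ × ℝ)) (p : ℝ × ℝ) : ℕ :=
  (L.filter (fun l => Above l p)).card

/-- The number of lines of `L` passing through a point. -/
def throughCount (L : Finset (ℝ × ℝ)) (p : ℝ × ℝ) : ℕ :=
  (L.filter (fun l => OnLine l p)).card

/-- `v` is a vertex of the `j`-th upper level of the arrangement of `L`:
it is a vertex of the arrangement (at least two lines through it), and some edge
incident to it lies at upper level `j`. -/
def VertexOfUpperLevel (L : Finset (ℝ × ℝ)) (j : ℕ) (v : ℝ × ℝ) : Prop :=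
  2 ≤ throughCount L v ∧ upperCount L v ≤ j ∧ j ≤ upperCount L v + throughCount L v - 1

open Filter Topology

-- two lines agreeing at two points are equal
lemma line_eq_of_two {l m : ℝ × ℝ} {x1 x2 : ℝ} (hx : x1 ≠ x2)
    (h1 : evalLine l x1 = evalLine m x1) (h2 : evalLine l x2 = evalLine m x2) : l = m := by
  simp only [evalLine] at h1 h2
  have hs : l.1 = m.1 := by
    by_contra hns
    apply hx
    have : (l.1 - m.1) * x1 = (l.1 - m.1) * x2 := by ring_nf; nlinarith [h1, h2]
    exact mul_left_cancel₀ (sub_ne_zero.mpr hns) this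
  have : l.2 = m.2 := by rw [hs] at h1; linarith
  exact Prod.ext hs this

lemma slope_ne_of_through {l m : ℝ × ℝ} {p : ℝ × ℝ} (hl : OnLine l p) (hm : OnLine m p)
    (hne : l ≠ m) : l.1 ≠ m.1 := by
  intro hs
  apply hne
  simp only [OnLine, evalLine] at hl hm
  have : l.2 = m.2 := by rw [hs] at hl; linarith
  exact Prod.ext hs this

lemma uctc (L : Finset (ℝ × ℝ)) (x y : ℝ) :
    upperCount L (x, y) + throughCount L (x, y)
      = (L.filter fun l => y ≤ evalLine l x).card := by
  rw [upperCount, throughCount, ← Finset.card_union_of_disjoint]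
  · congr 1
    rw [← Finset.filter_or]
    apply Finset.filter_congr
    intro l _
    simp only [Above, OnLine, le_iff_lt_or_eq]
    tauto
  · rw [Finset.disjoint_filter]
    intro l _ h h'
    simp only [Above] at h
    simp only [OnLine] at h'
    exact absurd h' (ne_of_gt h)

lemma uc_antitone (L : Finset (ℝ × ℝ)) {x y1 y2 : ℝ} (h : y1 < y2) :
    upperCount L (x, y2) + throughCount L (x, y2) ≤ upperCount L (x, y1) := by
  rw [uctc]
  apply Finset.card_le_card
  intro l hl
  rw [Finset.mem_filter] at hl ⊢
  exact ⟨hl.1, by simpa [Above] using lt_of_lt_of_le h hl.2⟩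

lemma uctc_le_card (L : Finset (ℝ × ℝ)) (p : ℝ × ℝ) :
    upperCount L p + throughCount L p ≤ L.card := by
  obtain ⟨x, y⟩ := p
  rw [uctc]
  exact Finset.card_filter_le _ _

/-- A point is on the `j`-th upper level curve. -/
def OnLevel (L : Finset (ℝ × ℝ)) (j : ℕ) (p : ℝ × ℝ) : Prop :=
  upperCount L p ≤ j ∧ j + 1 ≤ upperCount L p + throughCount L p

lemma onLevel_unique {L : Finset (ℝ × ℝ)} {j : ℕ} {x y1 y2 : ℝ}
    (h1 : OnLevel L j (x, y1)) (h2 : OnLevel L j (x, y2)) : y1 = y2 := by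
  rcases lt_trichotomy y1 y2 with h | h | h
  · have := uc_antitone L (x := x) h
    obtain ⟨a1, b1⟩ := h1; obtain ⟨a2, b2⟩ := h2
    omega
  · exact h
  · have := uc_antitone L (x := x) h
    obtain ⟨a1, b1⟩ := h1; obtain ⟨a2, b2⟩ := h2
    omega

lemma onLevel_exists (L : Finset (ℝ × ℝ)) (j : ℕ) (hcard : j + 1 ≤ L.card) (x : ℝ) :
    ∃ y, OnLevel L j (x, y) := by
  have hLne : L.Nonempty := Finset.card_pos.mp (by omega)
  set V : Finset ℝ := L.image (fun l => evalLine l x) with hV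
  have hVne : V.Nonempty := hLne.image _
  have hucdef : ∀ y : ℝ, upperCount L (x, y) = (L.filter fun l => y < evalLine l x).card := by
    intro y; rfl
  set S : Finset ℝ := V.filter (fun v => upperCount L (x, v) ≤ j) with hS
  have hSne : S.Nonempty := by
    refine ⟨V.max' hVne, ?_⟩
    rw [hS, Finset.mem_filter]
    refine ⟨V.max'_mem hVne, ?_⟩
    rw [hucdef]
    have : (L.filter fun l => V.max' hVne < evalLine l x) = ∅ := by
      rw [Finset.filter_eq_empty_iff]
      intro l hl
      exact not_lt.mpr (V.le_max' _ (Finset.mem_image_of_mem _ hl))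
    rw [this]; simp
  set y := S.min' hSne with hy
  have hymem : y ∈ S := S.min'_mem hSne
  rw [hS, Finset.mem_filter] at hymem
  refine ⟨y, hymem.2, ?_⟩
  by_contra hcon
  push_neg at hcon
  rw [uctc] at hcon
  -- there is a line strictly below y
  have hbelow : (L.filter fun l => evalLine l x < y).Nonempty := by
    by_contra hne
    rw [Finset.not_nonempty_iff_eq_empty, Finset.filter_eq_empty_iff] at hne
    have : L.filter (fun l => y ≤ evalLine l x) = L := by
      apply Finset.filter_true_of_mem
      intro l hl
      exact not_lt.mp (hne hl)
    rw [this] at hcon; omega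
  set W : Finset ℝ := V.filter (fun v => v < y) with hW
  have hWne : W.Nonempty := by
    obtain ⟨l, hl⟩ := hbelow
    rw [Finset.mem_filter] at hl
    exact ⟨evalLine l x, by rw [hW, Finset.mem_filter]; exact ⟨Finset.mem_image_of_mem _ hl.1, hl.2⟩⟩
  set v' := W.max' hWne with hv'
  have hv'mem : v' ∈ W := W.max'_mem hWne
  rw [hW, Finset.mem_filter] at hv'mem
  have hv'S : v' ∈ S := by
    rw [hS, Finset.mem_filter]
    refine ⟨hv'mem.1, ?_⟩
    rw [hucdef]
    have heq : (L.filter fun l => v' < evalLine l x) = (L.filter fun l => y ≤ evalLine l x) := by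
      apply Finset.filter_congr
      intro l hl
      constructor
      · intro h
        by_contra hyl
        push_neg at hyl
        have : evalLine l x ∈ W := by
          rw [hW, Finset.mem_filter]
          exact ⟨Finset.mem_image_of_mem _ hl, hyl⟩
        exact absurd (W.le_max' _ this) (not_le.mpr h)
      · intro h; exact lt_of_lt_of_le hv'mem.2 h
    rw [heq]; omega
  have := S.min'_le _ hv'S
  rw [← hy] at this
  exact absurd this (not_le.mpr hv'mem.2)

lemma continuous_evalLine (l : ℝ × ℝ) : Continuous (evalLine l) := by
  unfold evalLine; fun_prop

/-- Sign preservation: lines strictly above/below a point on line `l0` stay so nearby. -/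
lemma sign_eventually (L : Finset (ℝ × ℝ)) (l0 : ℝ × ℝ) (x0 : ℝ) :
    ∀ᶠ x in 𝓝 x0, ∀ l ∈ L,
      (Above l (x0, evalLine l0 x0) → Above l (x, evalLine l0 x)) ∧
      (Below l (x0, evalLine l0 x0) → Below l (x, evalLine l0 x)) := by
  rw [Filter.eventually_all_finset]
  intro l _
  rcases lt_trichotomy (evalLine l0 x0) (evalLine l x0) with h | h | h
  · have hev : ∀ᶠ x in 𝓝 x0, evalLine l0 x < evalLine l x :=
      ContinuousAt.eventually_lt (continuous_evalLine l0).continuousAt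
        (continuous_evalLine l).continuousAt h
    filter_upwards [hev] with x hx
    constructor
    · intro _; exact hx
    · intro hb; exact absurd hb (by simp [Below, not_lt]; exact le_of_lt h)
  · filter_upwards with x
    constructor
    · intro ha; exact absurd ha (by simp [Above]; exact le_of_eq h.symm)
    · intro hb; exact absurd hb (by simp [Below]; exact le_of_eq h)
  · have hev : ∀ᶠ x in 𝓝 x0, evalLine l x < evalLine l0 x :=
      ContinuousAt.eventually_lt (continuous_evalLine l).continuousAt
        (continuous_evalLine l0).continuousAt h
    filter_upwards [hev] with x hx
    constructor
    · intro ha; exact absurd ha (by simp [Above]; exact le_of_lt h)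
    · intro _; exact hx

/-- If a point on the level has a unique line through it, the level follows that line nearby. -/
lemma onLevel_local {L : Finset (ℝ × ℝ)} {j : ℕ} {x0 y0 : ℝ}
    (hP : OnLevel L j (x0, y0)) (l0 : ℝ × ℝ)
    (hfilter : L.filter (fun l => OnLine l (x0, y0)) = {l0}) :
    ∀ᶠ x in 𝓝 x0, OnLevel L j (x, evalLine l0 x) ∧
      L.filter (fun l => OnLine l (x, evalLine l0 x)) = {l0} := by
  have hl0L : l0 ∈ L ∧ OnLine l0 (x0, y0) := by
    have : l0 ∈ L.filter (fun l => OnLine l (x0, y0)) := by rw [hfilter]; exact Finset.mem_singleton_self _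
    simpa using this
  have hy0 : evalLine l0 x0 = y0 := hl0L.2
  have hsign := sign_eventually L l0 x0
  rw [hy0] at hsign
  filter_upwards [hsign] with x hx
  have honl0 : OnLine l0 (x, evalLine l0 x) := rfl
  -- classify each line at the new point
  have hstatus : ∀ l ∈ L, l ≠ l0 → (Above l (x0, y0) ∨ Below l (x0, y0)) := by
    intro l hl hne
    rcases lt_trichotomy y0 (evalLine l x0) with h | h | h
    · exact Or.inl h
    · exfalso
      have : l ∈ L.filter (fun l => OnLine l (x0, y0)) := by
        rw [Finset.mem_filter]; exact ⟨hl, h.symm⟩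
      rw [hfilter, Finset.mem_singleton] at this
      exact hne this
    · exact Or.inr h
  have hAbove : L.filter (fun l => Above l (x, evalLine l0 x))
      = L.filter (fun l => Above l (x0, y0)) := by
    apply Finset.filter_congr
    intro l hl
    constructor
    · intro h
      by_cases hne : l = l0
      · exfalso; subst hne; exact lt_irrefl _ h
      · rcases hstatus l hl hne with h' | h'
        · exact h'
        · exact absurd ((hx l hl).2 h') (by simp [Below, Above] at h ⊢; exact le_of_lt h)
    · intro h; exact (hx l hl).1 h
  have hThrough : L.filter (fun l => OnLine l (x, evalLine l0 x)) = {l0} := by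
    apply Finset.Subset.antisymm
    · intro l hl
      rw [Finset.mem_filter] at hl
      rw [Finset.mem_singleton]
      by_contra hne
      rcases hstatus l hl.1 hne with h' | h'
      · exact absurd hl.2 (ne_of_gt ((hx l hl.1).1 h'))
      · exact absurd hl.2 (ne_of_lt ((hx l hl.1).2 h'))
    · intro l hl
      rw [Finset.mem_singleton] at hl
      subst hl
      rw [Finset.mem_filter]
      exact ⟨hl0L.1, honl0⟩
  refine ⟨⟨?_, ?_⟩, hThrough⟩
  · rw [upperCount, hAbove]; exact hP.1
  · have h1 : throughCount L (x, evalLine l0 x) = 1 := by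
      rw [throughCount, hThrough, Finset.card_singleton]
    have h0 : throughCount L (x0, y0) = 1 := by
      rw [throughCount, hfilter, Finset.card_singleton]
    have h2 := hP.2
    simp only [upperCount, throughCount, hfilter, hAbove, hThrough, Finset.card_singleton] at h2 ⊢
    omega

/-- Near a simple vertex `a` (two lines through it), on the side where `p1` is below `p2`,
the (k+1)-level follows `p1` and the k-level follows `p2`. -/
lemma vertex_side {L : Finset (ℝ × ℝ)} {k : ℕ} {a : ℝ × ℝ} {p1 p2 : ℝ × ℝ}
    (hf : L.filter (fun l => OnLine l a) = {p1, p2}) (hp12 : p1 ≠ p2)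
    (huc : upperCount L a = k) (F : Filter ℝ) (hF : F ≤ 𝓝 a.1)
    (hlt : ∀ᶠ x in F, evalLine p1 x < evalLine p2 x) :
    ∀ᶠ x in F, OnLevel L (k + 1) (x, evalLine p1 x) ∧ OnLevel L k (x, evalLine p2 x) := by
  have hp1 : p1 ∈ L ∧ OnLine p1 a := by
    have : p1 ∈ L.filter (fun l => OnLine l a) := by rw [hf]; simp
    simpa using this
  have hp2 : p2 ∈ L ∧ OnLine p2 a := by
    have : p2 ∈ L.filter (fun l => OnLine l a) := by rw [hf]; simp
    simpa using this
  have hy1 : evalLine p1 a.1 = a.2 := hp1.2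
  have hy2 : evalLine p2 a.1 = a.2 := hp2.2
  have hsign1 := (sign_eventually L p1 a.1).filter_mono hF
  have hsign2 := (sign_eventually L p2 a.1).filter_mono hF
  rw [hy1] at hsign1
  rw [hy2] at hsign2
  have hstatus : ∀ l ∈ L, l ≠ p1 → l ≠ p2 → (Above l a ∨ Below l a) := by
    intro l hl h1 h2
    rcases lt_trichotomy a.2 (evalLine l a.1) with h | h | h
    · exact Or.inl h
    · exfalso
      have : l ∈ L.filter (fun l => OnLine l a) := by
        rw [Finset.mem_filter]; exact ⟨hl, h.symm⟩
      rw [hf] at this; simp at this; tauto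
    · exact Or.inr h
  have haP : Prod.mk a.1 a.2 = a := rfl
  filter_upwards [hsign1, hsign2, hlt] with x hx1 hx2 hxlt
  constructor
  · -- level k+1 along p1
    have hAbove : L.filter (fun l => Above l (x, evalLine p1 x))
        = insert p2 (L.filter (fun l => Above l a)) := by
      ext l
      rw [Finset.mem_insert, Finset.mem_filter, Finset.mem_filter]
      constructor
      · rintro ⟨hl, hab⟩
        by_cases h1 : l = p1
        · exfalso; subst h1; exact lt_irrefl _ hab
        by_cases h2 : l = p2
        · exact Or.inl h2
        rcases hstatus l hl h1 h2 with h | h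
        · rw [haP] at hx1
          exact Or.inr ⟨hl, h⟩
        · exfalso
          rw [haP] at hx1
          have := (hx1 l hl).2 h
          simp only [Above, Below] at hab this
          exact lt_irrefl _ (lt_trans hab this)
      · rintro (h | ⟨hl, h⟩)
        · subst h
          exact ⟨hp2.1, hxlt⟩
        · rw [haP] at hx1
          exact ⟨hl, (hx1 l hl).1 h⟩
    have hThr : L.filter (fun l => OnLine l (x, evalLine p1 x)) = {p1} := by
      apply Finset.Subset.antisymm
      · intro l hl
        rw [Finset.mem_filter] at hl
        rw [Finset.mem_singleton]
        by_contra h1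
        by_cases h2 : l = p2
        · subst h2
          simp only [OnLine] at hl
          exact absurd hl.2 (ne_of_gt hxlt)
        rcases hstatus l hl.1 h1 h2 with h | h
        · rw [haP] at hx1
          exact absurd hl.2 (ne_of_gt ((hx1 l hl.1).1 h))
        · rw [haP] at hx1
          exact absurd hl.2 (ne_of_lt ((hx1 l hl.1).2 h))
      · intro l hl
        rw [Finset.mem_singleton] at hl
        subst hl
        rw [Finset.mem_filter]
        exact ⟨hp1.1, rfl⟩
    have hp2notin : p2 ∉ L.filter (fun l => Above l a) := by
      rw [Finset.mem_filter]
      rintro ⟨-, h⟩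
      simp only [Above] at h
      rw [hy2] at h
      exact lt_irrefl _ h
    constructor
    · simp only [upperCount, hAbove, Finset.card_insert_of_notMem hp2notin]
      have : (L.filter (fun l => Above l a)).card = k := huc
      omega
    · simp only [upperCount, throughCount, hAbove, hThr,
        Finset.card_insert_of_notMem hp2notin, Finset.card_singleton]
      have : (L.filter (fun l => Above l a)).card = k := huc
      omega
  · -- level k along p2
    have hAbove : L.filter (fun l => Above l (x, evalLine p2 x))
        = L.filter (fun l => Above l a) := by
      apply Finset.filter_congr
      intro l hl
      constructor
      · intro hab
        by_cases h2 : l = p2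
        · exfalso; subst h2; exact lt_irrefl _ hab
        by_cases h1 : l = p1
        · exfalso; subst h1
          simp only [Above] at hab
          exact lt_irrefl _ (lt_trans hab hxlt)
        rcases hstatus l hl h1 h2 with h | h
        · exact h
        · exfalso
          rw [haP] at hx2
          have := (hx2 l hl).2 h
          simp only [Above, Below] at hab this
          exact lt_irrefl _ (lt_trans hab this)
      · intro h
        rw [haP] at hx2
        exact (hx2 l hl).1 h
    have hThr : L.filter (fun l => OnLine l (x, evalLine p2 x)) = {p2} := by
      apply Finset.Subset.antisymm
      · intro l hl
        rw [Finset.mem_filter] at hl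
        rw [Finset.mem_singleton]
        by_contra h2
        by_cases h1 : l = p1
        · subst h1
          simp only [OnLine] at hl
          exact absurd hl.2 (ne_of_lt hxlt)
        rcases hstatus l hl.1 h1 h2 with h | h
        · rw [haP] at hx2
          exact absurd hl.2 (ne_of_gt ((hx2 l hl.1).1 h))
        · rw [haP] at hx2
          exact absurd hl.2 (ne_of_lt ((hx2 l hl.1).2 h))
      · intro l hl
        rw [Finset.mem_singleton] at hl
        subst hl
        rw [Finset.mem_filter]
        exact ⟨hp2.1, rfl⟩
    constructor
    · simp only [upperCount, hAbove]
      exact le_of_eq huc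
    · simp only [upperCount, throughCount, hAbove, hThr, Finset.card_singleton]
      have : (L.filter (fun l => Above l a)).card = k := huc
      omega

/-- If on an open interval the level always has a unique line through it, then
the whole level on the interval is a single line. -/
lemma exists_line_forall {L : Finset (ℝ × ℝ)} {j : ℕ} {a b : ℝ} (hab : a < b)
    (hex : ∀ x ∈ Set.Ioo a b, ∃ y, OnLevel L j (x, y))
    (htc1 : ∀ x y, x ∈ Set.Ioo a b → OnLevel L j (x, y) →
      ∃ l0, L.filter (fun l => OnLine l (x, y)) = {l0}) :
    ∃ l0 ∈ L, ∀ x ∈ Set.Ioo a b, OnLevel L j (x, evalLine l0 x) := by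
  have hmid : (a + b) / 2 ∈ Set.Ioo a b := ⟨by linarith, by linarith⟩
  obtain ⟨y0, hy0⟩ := hex _ hmid
  obtain ⟨l0, hl0⟩ := htc1 _ _ hmid hy0
  have hl0L : l0 ∈ L := by
    have : l0 ∈ L.filter (fun l => OnLine l ((a+b)/2, y0)) := by rw [hl0]; simp
    exact (Finset.mem_filter.mp this).1
  refine ⟨l0, hl0L, ?_⟩
  set u : Set ℝ := {x | ∀ᶠ z in 𝓝 x, OnLevel L j (z, evalLine l0 z)} with hu
  set v : Set ℝ := {x | ∀ᶠ z in 𝓝 x, ¬ OnLevel L j (z, evalLine l0 z)} with hv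
  have hou : IsOpen u := isOpen_setOf_eventually_nhds
  have hov : IsOpen v := isOpen_setOf_eventually_nhds
  have hcover : Set.Ioo a b ⊆ u ∪ v := by
    intro x hx
    obtain ⟨y, hy⟩ := hex x hx
    obtain ⟨c, hc⟩ := htc1 x y hx hy
    have hloc := onLevel_local hy c hc
    by_cases hceq : c = l0
    · subst hceq
      left
      filter_upwards [hloc] with z hz using hz.1
    · right
      filter_upwards [hloc] with z hz
      intro hcon
      have heq : evalLine l0 z = evalLine c z := onLevel_unique hcon hz.1
      have : l0 ∈ L.filter (fun l => OnLine l (z, evalLine c z)) := by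
        rw [Finset.mem_filter]
        exact ⟨hl0L, heq⟩
      rw [hz.2, Finset.mem_singleton] at this
      exact hceq this.symm
  have hux : (a + b) / 2 ∈ u := by
    have hloc := onLevel_local hy0 l0 hl0
    have hy0' : y0 = evalLine l0 ((a+b)/2) := by
      have : l0 ∈ L.filter (fun l => OnLine l ((a+b)/2, y0)) := by rw [hl0]; simp
      exact ((Finset.mem_filter.mp this).2).symm
    filter_upwards [hloc] with z hz using hz.1
  have hIoo : Set.Ioo a b ⊆ u := by
    by_contra hcon
    have hvne : (Set.Ioo a b ∩ v).Nonempty := by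
      rw [Set.not_subset] at hcon
      obtain ⟨x, hx, hxu⟩ := hcon
      rcases hcover hx with h | h
      · exact absurd h hxu
      · exact ⟨x, hx, h⟩
    have hune : (Set.Ioo a b ∩ u).Nonempty := ⟨_, hmid, hux⟩
    obtain ⟨x, -, hxu, hxv⟩ := isPreconnected_Ioo u v hou hov hcover hune hvne
    have h1 : OnLevel L j (x, evalLine l0 x) := hxu.self_of_nhds
    have h2 : ¬ OnLevel L j (x, evalLine l0 x) := hxv.self_of_nhds
    exact h2 h1
  intro x hx
  exact (hIoo hx).self_of_nhds

lemma vertex_two_lines {L : Finset (ℝ × ℝ)} {a : ℝ × ℝ} (htc : throughCount L a = 2) :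
    ∃ p1 p2 : ℝ × ℝ, p1 ≠ p2 ∧ p1.1 < p2.1 ∧ evalLine p1 a.1 = a.2 ∧ evalLine p2 a.1 = a.2 ∧
      L.filter (fun l => OnLine l a) = {p1, p2} := by
  obtain ⟨p, q, hpq, hf⟩ := Finset.card_eq_two.mp htc
  have hp : OnLine p a := by
    have : p ∈ L.filter (fun l => OnLine l a) := by rw [hf]; simp
    exact (Finset.mem_filter.mp this).2
  have hq : OnLine q a := by
    have : q ∈ L.filter (fun l => OnLine l a) := by rw [hf]; simp
    exact (Finset.mem_filter.mp this).2
  rcases lt_or_gt_of_ne (slope_ne_of_through hp hq hpq) with h | h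
  · exact ⟨p, q, hpq, h, hp, hq, hf⟩
  · exact ⟨q, p, hpq.symm, h, hq, hp, by rw [hf, Finset.pair_comm]⟩

lemma agree_line {L : Finset (ℝ × ℝ)} {j : ℕ} {c d : ℝ} {p l : ℝ × ℝ}
    (F : Filter ℝ) [hne : F.NeBot]
    (hIoo : Set.Ioo c d ∈ F) (hx1 : ∀ x ∈ Set.Ioo c d, {z : ℝ | z ≠ x} ∈ F)
    (ev : ∀ᶠ x in F, OnLevel L j (x, evalLine p x))
    (hforall : ∀ x ∈ Set.Ioo c d, OnLevel L j (x, evalLine l x)) : p = l := by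
  have e1 : ∀ᶠ x in F, x ∈ Set.Ioo c d ∧ OnLevel L j (x, evalLine p x) :=
    (eventually_of_mem hIoo fun _ h => h).and ev
  obtain ⟨x1, hI1, hP1⟩ := e1.exists
  have e2 := e1.and (eventually_of_mem (hx1 x1 hI1) fun _ h => h)
  obtain ⟨x2, ⟨hI2, hP2⟩, hne12⟩ := e2.exists
  have h1 : evalLine p x1 = evalLine l x1 := onLevel_unique hP1 (hforall x1 hI1)
  have h2 : evalLine p x2 = evalLine l x2 := onLevel_unique hP2 (hforall x2 hI2)
  exact line_eq_of_two (Ne.symm hne12) h1 h2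

lemma between {L : Finset (ℝ × ℝ)} {k : ℕ} {a b : ℝ × ℝ}
    (hgen : ∀ p : ℝ × ℝ, throughCount L p ≤ 2)
    (huca : upperCount L a = k) (htca : throughCount L a = 2)
    (hucb : upperCount L b = k) (htcb : throughCount L b = 2)
    (hab : a.1 < b.1)
    (hnok : ∀ v, VertexOfUpperLevel L k v → v.1 ∉ Set.Ioo a.1 b.1)
    (hno : ∀ v, VertexOfUpperLevel L (k + 1) v → v.1 ∉ Set.Ioo a.1 b.1) : False := by
  have hcard : k + 2 ≤ L.card := by
    have := uctc_le_card L a; omega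
  -- unique line through any level point in the interior
  have htc1 : ∀ j : ℕ, (∀ v, VertexOfUpperLevel L j v → v.1 ∉ Set.Ioo a.1 b.1) →
      ∀ x y, x ∈ Set.Ioo a.1 b.1 → OnLevel L j (x, y) →
      ∃ l0, L.filter (fun l => OnLine l (x, y)) = {l0} := by
    intro j hnov x y hx hP
    have ht2 := hgen (x, y)
    have ht1 : 1 ≤ throughCount L (x, y) := by
      obtain ⟨h1, h2⟩ := hP; omega
    have : throughCount L (x, y) = 1 := by
      rcases Nat.lt_or_ge (throughCount L (x, y)) 2 with h | h
      · omega
      · exfalso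
        apply hnov (x, y) _ hx
        obtain ⟨h1, h2⟩ := hP
        exact ⟨h, h1, by omega⟩
    exact Finset.card_eq_one.mp this
  obtain ⟨lF, hlFL, hlF⟩ := exists_line_forall (j := k + 1) hab
    (fun x _ => onLevel_exists L (k+1) (by omega) x) (htc1 (k+1) hno)
  obtain ⟨lG, hlGL, hlG⟩ := exists_line_forall (j := k) hab
    (fun x _ => onLevel_exists L k (by omega) x) (htc1 k hnok)
  -- at vertex a (right side)
  obtain ⟨p1, p2, hp12, hps, hp1a, hp2a, hfa⟩ := vertex_two_lines htca
  have hlta : ∀ᶠ x in 𝓝[>] a.1, evalLine p1 x < evalLine p2 x := by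
    filter_upwards [self_mem_nhdsWithin] with x hx
    simp only [Set.mem_Ioi] at hx
    have : evalLine p2 x - evalLine p1 x = (p2.1 - p1.1) * (x - a.1) := by
      simp only [evalLine]
      have h1 : p1.1 * a.1 + p1.2 = a.2 := hp1a
      have h2 : p2.1 * a.1 + p2.2 = a.2 := hp2a
      nlinarith [h1, h2]
    nlinarith [this]
  have hsidea := vertex_side hfa hp12 huca (𝓝[>] a.1) nhdsWithin_le_nhds hlta
  have hIooa : Set.Ioo a.1 b.1 ∈ 𝓝[>] a.1 := Ioo_mem_nhdsGT hab
  have hx1a : ∀ x ∈ Set.Ioo a.1 b.1, {z : ℝ | z ≠ x} ∈ 𝓝[>] a.1 := by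
    intro x hx
    exact mem_of_superset (Ioo_mem_nhdsGT hx.1) (fun z hz => ne_of_lt hz.2)
  have hp1F : p1 = lF :=
    agree_line (𝓝[>] a.1) hIooa hx1a (hsidea.mono fun x h => h.1) hlF
  have hp2G : p2 = lG :=
    agree_line (𝓝[>] a.1) hIooa hx1a (hsidea.mono fun x h => h.2) hlG
  -- at vertex b (left side)
  obtain ⟨q1, q2, hq12, hqs, hq1b, hq2b, hfb⟩ := vertex_two_lines htcb
  have hltb : ∀ᶠ x in 𝓝[<] b.1, evalLine q2 x < evalLine q1 x := by
    filter_upwards [self_mem_nhdsWithin] with x hx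
    simp only [Set.mem_Iio] at hx
    have heq : evalLine q1 x - evalLine q2 x = (q1.1 - q2.1) * (x - b.1) := by
      simp only [evalLine]
      have h1 : q1.1 * b.1 + q1.2 = b.2 := hq1b
      have h2 : q2.1 * b.1 + q2.2 = b.2 := hq2b
      nlinarith [h1, h2]
    nlinarith [heq, mul_pos_of_neg_of_neg (sub_neg.mpr hqs) (sub_neg.mpr hx)]
  have hsideb := vertex_side (by rw [hfb, Finset.pair_comm]) hq12.symm hucb (𝓝[<] b.1)
    nhdsWithin_le_nhds hltb
  have hIoob : Set.Ioo a.1 b.1 ∈ 𝓝[<] b.1 := Ioo_mem_nhdsLT hab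
  have hx1b : ∀ x ∈ Set.Ioo a.1 b.1, {z : ℝ | z ≠ x} ∈ 𝓝[<] b.1 := by
    intro x hx
    exact mem_of_superset (Ioo_mem_nhdsLT hx.2) (fun z hz => ne_of_gt hz.1)
  have hq2F : q2 = lF :=
    agree_line (𝓝[<] b.1) hIoob hx1b (hsideb.mono fun x h => h.1) hlF
  have hq1G : q1 = lG :=
    agree_line (𝓝[<] b.1) hIoob hx1b (hsideb.mono fun x h => h.2) hlG
  -- lF and lG both pass through a and b, hence equal
  have hFG : lF = lG := by
    apply line_eq_of_two (ne_of_lt hab)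
    · rw [← hp1F, ← hp2G, hp1a, hp2a]
    · rw [← hq2F, ← hq1G, hq2b, hq1b]
  -- contradiction at the midpoint
  set x0 := (a.1 + b.1) / 2 with hx0
  have hx0I : x0 ∈ Set.Ioo a.1 b.1 := ⟨by simp only [hx0]; linarith, by simp only [hx0]; linarith⟩
  have hK1 := hlF x0 hx0I
  have hK := hlG x0 hx0I
  rw [← hFG] at hK
  obtain ⟨l0, hl0⟩ := htc1 (k+1) hno x0 (evalLine lF x0) hx0I hK1
  have htc : throughCount L (x0, evalLine lF x0) = 1 := by
    rw [throughCount, hl0, Finset.card_singleton]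
  obtain ⟨hA1, hB1⟩ := hK1
  obtain ⟨hA, hB⟩ := hK
  omega

lemma count_lemma : ∀ (S T : Finset ℝ), S ⊆ T →
    (∀ x ∈ S, ∀ y ∈ S, x < y → (∀ s ∈ S, s ∉ Set.Ioo x y) → ∃ t ∈ T, t ∈ Set.Ioo x y) →
    2 * S.card - 1 ≤ T.card := by
  intro S
  induction S using Finset.strongInduction with
  | _ S ih =>
    intro T hST h
    rcases Nat.lt_or_ge S.card 2 with hc | hc
    · have := Finset.card_le_card hST; omega
    · have hSne : S.Nonempty := Finset.card_pos.mp (by omega)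
      set M := S.max' hSne with hM
      set S' := S.erase M with hS'
      have hsub : S' ⊂ S := Finset.erase_ssubset (S.max'_mem hSne)
      have hcard' : S'.card = S.card - 1 := Finset.card_erase_of_mem (S.max'_mem hSne)
      have hS'ne : S'.Nonempty := Finset.card_pos.mp (by omega)
      set M' := S'.max' hS'ne with hM'
      have hM'S : M' ∈ S' := S'.max'_mem hS'ne
      have hM'M : M' < M := by
        have h1 : M' ∈ S := Finset.mem_of_mem_erase hM'S
        have h2 : M' ≠ M := Finset.ne_of_mem_erase hM'S
        exact lt_of_le_of_ne (S.le_max' _ h1) h2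
      obtain ⟨t, htT, htI⟩ := h M' (Finset.mem_of_mem_erase hM'S) M (S.max'_mem hSne) hM'M
        (by
          intro s hs hsI
          have hsM : s ≠ M := ne_of_lt hsI.2
          have : s ∈ S' := Finset.mem_erase.mpr ⟨hsM, hs⟩
          exact absurd (S'.le_max' _ this) (not_le.mpr hsI.1))
      set T' := T.filter (fun z => z ≤ M') with hT'
      have hres := ih S' hsub T'
        (by
          intro s hs
          rw [hT', Finset.mem_filter]
          exact ⟨hST (Finset.mem_of_mem_erase hs), S'.le_max' _ hs⟩)
        (by
          intro x hx y hy hxy hnos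
          have hnoS : ∀ s ∈ S, s ∉ Set.Ioo x y := by
            intro s hs hsI
            have hyM : y ≤ M' := S'.le_max' _ hy
            have hsM : s ≠ M := ne_of_lt (lt_of_le_of_lt (le_trans (le_of_lt hsI.2) hyM) hM'M)
            exact hnos s (Finset.mem_erase.mpr ⟨hsM, hs⟩) hsI
          obtain ⟨t'', ht''T, ht''I⟩ := h x (Finset.mem_of_mem_erase hx)
            y (Finset.mem_of_mem_erase hy) hxy hnoS
          refine ⟨t'', ?_, ht''I⟩
          rw [hT', Finset.mem_filter]
          exact ⟨ht''T, le_trans (le_of_lt ht''I.2) (S'.le_max' _ hy)⟩)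
      have htne : t ∉ insert M T' := by
        rw [Finset.mem_insert]
        rintro (h' | h')
        · exact absurd h' (ne_of_lt htI.2)
        · rw [hT', Finset.mem_filter] at h'
          exact absurd h'.2 (not_le.mpr htI.1)
      have hMne : M ∉ T' := by
        rw [hT', Finset.mem_filter]
        rintro ⟨-, h'⟩
        exact absurd h' (not_le.mpr hM'M)
      have hsubT : insert t (insert M T') ⊆ T := by
        intro z hz
        rw [Finset.mem_insert, Finset.mem_insert] at hz
        rcases hz with h' | h' | h'
        · subst h'; exact htT
        · subst h'; exact hST (S.max'_mem hSne)
        · exact Finset.mem_of_mem_filter _ h'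
      have hcardT : T'.card + 2 ≤ T.card := by
        have := Finset.card_le_card hsubT
        rw [Finset.card_insert_of_notMem htne, Finset.card_insert_of_notMem hMne] at this
        omega
      omega


lemma vertex_k_facts {L : Finset (ℝ × ℝ)} {k : ℕ} {v : ℝ × ℝ}
    (hgen : ∀ p : ℝ × ℝ, throughCount L p ≤ 2)
    (hsub : ∀ v, VertexOfUpperLevel L k v → VertexOfUpperLevel L (k + 1) v)
    (hv : VertexOfUpperLevel L k v) :
    upperCount L v = k ∧ throughCount L v = 2 := by
  obtain ⟨h1, h2, h3⟩ := hv
  obtain ⟨g1, g2, g3⟩ := hsub v ⟨h1, h2, h3⟩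
  have := hgen v
  omega

lemma vertex_succ_facts {L : Finset (ℝ × ℝ)} {k : ℕ} {v : ℝ × ℝ}
    (hgen : ∀ p : ℝ × ℝ, throughCount L p ≤ 2)
    (hv : VertexOfUpperLevel L (k + 1) v) :
    k ≤ upperCount L v ∧ upperCount L v ≤ k + 1 ∧ throughCount L v = 2 := by
  obtain ⟨h1, h2, h3⟩ := hv
  have := hgen v
  omega

lemma fst_inj_of_window {L : Finset (ℝ × ℝ)} {m : ℕ} {v w : ℝ × ℝ}
    (hvw : v.1 = w.1)
    (hucv : m ≤ upperCount L v + 1) (hucv' : upperCount L v ≤ m)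
    (hucw : m ≤ upperCount L w + 1) (hucw' : upperCount L w ≤ m)
    (htcv : throughCount L v = 2) (htcw : throughCount L w = 2) : v = w := by
  have hv : v = (v.1, v.2) := rfl
  have hw : w = (w.1, w.2) := rfl
  rcases lt_trichotomy v.2 w.2 with h | h | h
  · exfalso
    have := uc_antitone L (x := v.1) h
    rw [← hv] at this
    rw [hvw, ← hw] at this
    omega
  · rw [hv, hw, hvw, h]
  · exfalso
    have := uc_antitone L (x := w.1) h
    rw [← hw] at this
    rw [← hvw, ← hv] at this
    omega

theorem stmt4 (L : Finset (ℝ × ℝ)) (k : ℕ)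
    (hgen : ∀ p : ℝ × ℝ, throughCount L p ≤ 2)
    (hfin : {v | VertexOfUpperLevel L k v}.Finite)
    (hfin' : {v | VertexOfUpperLevel L (k + 1) v}.Finite)
    (h2 : 2 ≤ hfin.toFinset.card)
    (hsub : ∀ v, VertexOfUpperLevel L k v → VertexOfUpperLevel L (k + 1) v) :
    2 * hfin.toFinset.card - 1 ≤ hfin'.toFinset.card := by
  classical
  set A := hfin.toFinset with hA
  set B := hfin'.toFinset with hB
  have memA : ∀ v, v ∈ A ↔ VertexOfUpperLevel L k v := fun v => hfin.mem_toFinset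
  have memB : ∀ v, v ∈ B ↔ VertexOfUpperLevel L (k + 1) v := fun v => hfin'.mem_toFinset
  set S := A.image Prod.fst with hS
  set T := B.image Prod.fst with hT
  have hAB : A ⊆ B := by
    intro v hv
    rw [memB]
    exact hsub v ((memA v).mp hv)
  have hST : S ⊆ T := Finset.image_subset_image hAB
  have hSA : S.card = A.card := by
    apply Finset.card_image_of_injOn
    intro v hv w hw hvw
    obtain ⟨hucv, htcv⟩ := vertex_k_facts hgen hsub ((memA v).mp hv)
    obtain ⟨hucw, htcw⟩ := vertex_k_facts hgen hsub ((memA w).mp hw)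
    exact fst_inj_of_window (m := k) hvw (by omega) (by omega) (by omega) (by omega) htcv htcw
  have hTB : T.card ≤ B.card := Finset.card_image_le
  have hcount := count_lemma S T hST (by
    intro x hx y hy hxy hnoS
    rw [hS, Finset.mem_image] at hx hy
    obtain ⟨va, hvaA, hvax⟩ := hx
    obtain ⟨vb, hvbA, hvby⟩ := hy
    obtain ⟨huca, htca⟩ := vertex_k_facts hgen hsub ((memA va).mp hvaA)
    obtain ⟨hucb, htcb⟩ := vertex_k_facts hgen hsub ((memA vb).mp hvbA)
    by_contra hcon
    push_neg at hcon
    refine between hgen huca htca hucb htcb (by rw [hvax, hvby]; exact hxy) ?_ ?_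
    · intro v hv
      rw [hvax, hvby]
      exact hnoS v.1 (Finset.mem_image_of_mem _ ((memA v).mpr hv))
    · intro v hv
      rw [hvax, hvby]
      exact hcon v.1 (Finset.mem_image_of_mem _ ((memB v).mpr hv)))
  omega
end
end

section
/- Let a, b, c, d be reals with 0 < a, 0 < c, 0 < d, b > 3c, b > 3d, and a + b − c − d > 0. Let x = (a·b − c·d)/(a + b − c − d). Then −b < x < b. -/
open Finset
open scoped Classical

noncomputable section

theorem stmt7 (a b c d x : ℝ) (ha : 0 < a) (hc : 0 < c) (hd : 0 < d)
    (hbc : 3 * c < b) (hbd : 3 * d < b) (hden : 0 < a + b - c - d)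
    (hx : x = (a * b - c * d) / (a + b - c - d)) :
    -b < x ∧ x < b := by
  subst hx
  constructor
  · rw [neg_lt, ← neg_div, div_lt_iff₀ hden]
    nlinarith [mul_pos ha hc, mul_pos ha hd, mul_pos hc hd, sq_nonneg b, mul_pos (mul_pos ha hc) hd]
  · rw [div_lt_iff₀ hden]
    nlinarith [mul_pos hc hd]
end
end

section
/- Let L be a multiset of n non-vertical lines (coinciding lines allowed) with underlying distinct-line set Γ, each γ ∈ Γ having multiplicity μ(γ), so that Σ_{γ∈Γ} μ(γ) = n. For a point p, let S(p) = Σ{ μ(γ) : γ ∈ Γ passes strictly below p }. Let k₀ be the smallest k such that some vertex of the arrangement of Γ lies strictly above the k-upper level of the multiset arrangement. Then every vertex lying strictly above the k₀-upper level has level (counted with multiplicity) exactly n − k₀, and every vertex on or below the k₀-upper level has level strictly less than n − k₀. -/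
open Finset
open scoped Classical

noncomputable section

/-- Lemma 4.1: multiset of lines given by the distinct-line set `Γ` with multiplicities `μ`.
`S p` is the level with multiplicity, `S' p` the upper level with multiplicity, and
`T p` the total multiplicity of lines through `p`.  A vertex `v` (a point on at least two
distinct lines of `Γ`) lies strictly above the `k`-upper level of the multiset arrangement
iff `S' v + T v ≤ k`.  If `k₀` is the smallest such `k`, then every vertex strictly above
the `k₀`-upper level has level exactly `n - k₀`, and every other vertex has smaller level. -/
theorem stmt11 (Γ : Finset (ℝ × ℝ)) (μ : ℝ × ℝ → ℕ) (n k₀ : ℕ)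
    (hμ : ∀ γ ∈ Γ, 1 ≤ μ γ) (hn : ∑ γ ∈ Γ, μ γ = n)
    (S S' T : ℝ × ℝ → ℕ)
    (hS : ∀ p, S p = ∑ γ ∈ Γ.filter (fun γ => Below γ p), μ γ)
    (hS' : ∀ p, S' p = ∑ γ ∈ Γ.filter (fun γ => Above γ p), μ γ)
    (hT : ∀ p, T p = ∑ γ ∈ Γ.filter (fun γ => OnLine γ p), μ γ)
    (hk₀ : ∃ v : ℝ × ℝ, 2 ≤ throughCount Γ v ∧ S' v + T v ≤ k₀)
    (hmin : ∀ k < k₀, ¬ ∃ v : ℝ × ℝ, 2 ≤ throughCount Γ v ∧ S' v + T v ≤ k) :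
    (∀ v : ℝ × ℝ, 2 ≤ throughCount Γ v → S' v + T v ≤ k₀ → S v = n - k₀) ∧
    (∀ w : ℝ × ℝ, 2 ≤ throughCount Γ w → k₀ < S' w + T w → S w < n - k₀) := by
  -- partition: S p + S' p + T p = n for every p
  have hpart : ∀ p : ℝ × ℝ, S p + S' p + T p = n := by
    intro p
    rw [hS, hS', hT, ← hn]
    have e1 := Finset.sum_filter_add_sum_filter_not Γ (fun γ => Below γ p) μ
    have e2 := Finset.sum_filter_add_sum_filter_not (Γ.filter (fun γ => ¬ Below γ p))
      (fun γ => Above γ p) μ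
    rw [Finset.filter_filter, Finset.filter_filter] at e2
    have hA : Γ.filter (fun a => ¬ Below a p ∧ Above a p) = Γ.filter (fun γ => Above γ p) := by
      apply Finset.filter_congr
      intro γ _
      simp only [Below, Above]
      constructor
      · intro h; exact h.2
      · intro h; exact ⟨by linarith, h⟩
    have hO : Γ.filter (fun a => ¬ Below a p ∧ ¬ Above a p) =
        Γ.filter (fun γ => OnLine γ p) := by
      apply Finset.filter_congr
      intro γ _
      simp only [Below, Above, OnLine]
      constructor
      · intro h; linarith [not_lt.mp h.1, not_lt.mp h.2]
      · intro h; constructor <;> simp [h]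
    rw [hA, hO] at e2
    omega
  -- minimality: every vertex has S' v + T v ≥ k₀
  have hge : ∀ v : ℝ × ℝ, 2 ≤ throughCount Γ v → k₀ ≤ S' v + T v := by
    intro v hv
    by_contra h
    push_neg at h
    exact hmin _ h ⟨v, hv, le_refl _⟩
  constructor
  · intro v hv hle
    have h1 := hge v hv
    have h2 := hpart v
    omega
  · intro w hw hlt
    have h2 := hpart w
    obtain ⟨v, hv, hvle⟩ := hk₀
    have h3 := hpart v
    omega
end
end

section
/- Let L be a set of n distinct non-vertical lines whose upper envelope consists of a single vertex v and two rays (no bounded edge). Let L_v be the lines through v and K = L \ L_v, assumed nonempty and not all parallel to a common line of L_v. Then no line ℓ ∈ L_v can simultaneously satisfy: (i) the left ray of ℓ from v lies above all lines of K to the left of v, and (ii) the right ray of ℓ from v lies above all lines of K to the right of v. -/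
open Finset
open scoped Classical

noncomputable section

/-- The value of the upper envelope of `L` at abscissa `x`. -/
def envVal (L : Finset (ℝ × ℝ)) (hL : L.Nonempty) (x : ℝ) : ℝ :=
  L.sup' hL (fun l => evalLine l x)

/-- If the upper envelope of `L` has the single vertex `v`, with `K` the (nonempty) set of
lines not through `v`, not all parallel to a common line through `v`, then no line `ℓ`
through `v` can have both its left ray above all lines of `K` to the left of `v` and its
right ray above all lines of `K` to the right of `v`. -/
theorem stmt14 (L : Finset (ℝ × ℝ)) (hL : L.Nonempty) (v : ℝ × ℝ)
    (henv : v.2 = envVal L hL v.1) (hv : 2 ≤ throughCount L v)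
    (huniq : ∀ p : ℝ × ℝ, p.2 = envVal L hL p.1 → 2 ≤ throughCount L p → p = v)
    (K : Finset (ℝ × ℝ)) (hK : K = L.filter (fun l => ¬ OnLine l v)) (hKne : K.Nonempty)
    (hpar : ∀ ℓ ∈ L, OnLine ℓ v → ∃ k ∈ K, k.1 ≠ ℓ.1) :
    ¬ ∃ ℓ ∈ L, OnLine ℓ v ∧
      (∀ k ∈ K, ∀ x : ℝ, x < v.1 → evalLine k x < evalLine ℓ x) ∧
      (∀ k ∈ K, ∀ x : ℝ, v.1 < x → evalLine k x < evalLine ℓ x) := by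
  rintro ⟨ℓ, hℓL, hon, hleft, hright⟩
  obtain ⟨k, hkK, hne⟩ := hpar ℓ hℓL hon
  have hm0 : ℓ.1 - k.1 ≠ 0 := sub_ne_zero.mpr fun h => hne h.symm
  rcases lt_or_gt_of_ne hm0 with hml | hmg
  · set x := max (v.1 + 1) ((-(ℓ.2 - k.2) - 1) / (ℓ.1 - k.1)) with hx
    have hx1 : v.1 < x := lt_of_lt_of_le (by linarith) (le_max_left _ _)
    have hx2 : (-(ℓ.2 - k.2) - 1) / (ℓ.1 - k.1) ≤ x := le_max_right _ _
    have hlt := hright k hkK x hx1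
    have hb : (ℓ.1 - k.1) * x ≤ -(ℓ.2 - k.2) - 1 := by
      have := mul_le_mul_of_nonpos_left hx2 (le_of_lt hml)
      rwa [mul_div_cancel₀ _ hm0] at this
    simp only [evalLine] at hlt
    nlinarith [hb, hlt]
  · set x := min (v.1 - 1) ((-(ℓ.2 - k.2) - 1) / (ℓ.1 - k.1)) with hx
    have hx1 : x < v.1 := lt_of_le_of_lt (min_le_left _ _) (by linarith)
    have hx2 : x ≤ (-(ℓ.2 - k.2) - 1) / (ℓ.1 - k.1) := min_le_right _ _
    have hlt := hleft k hkK x hx1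
    have hb : (ℓ.1 - k.1) * x ≤ -(ℓ.2 - k.2) - 1 := by
      have := mul_le_mul_of_nonneg_left hx2 (le_of_lt hmg)
      rwa [mul_div_cancel₀ _ hm0] at this
    simp only [evalLine] at hlt
    nlinarith [hb, hlt]
end
end

section
/- Let L be a set of n distinct non-vertical lines in general position (no three concurrent) all of which appear on their common upper envelope. Then every bounded face of the arrangement of L, other than the top unbounded face, the bottom face, and the two unbounded wedges adjacent to the top face, is bounded by at most four lines (is a triangle or a quadrilateral). -/
open Finset
open scoped Classical

noncomputable section

/-- Key algebraic fact for lines above the face: if the middle-slope line `l2` has a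
point (abscissa `x2`) weakly below the two other lines, it can never be strictly above
both of them. -/
lemma key3A (a1 b1 a2 b2 a3 b3 x2 x0 : ℝ)
    (h12 : a1 < a2) (h23 : a2 < a3)
    (H1 : a2*x2+b2 ≤ a1*x2+b1) (H2 : a2*x2+b2 ≤ a3*x2+b3)
    (H3 : a1*x0+b1 < a2*x0+b2) (H4 : a3*x0+b3 < a2*x0+b2) : False := by
  have hlt : x2 < x0 := by
    by_contra h
    push_neg at h
    nlinarith [mul_nonneg (sub_nonneg.2 h12.le) (sub_nonneg.2 h)]
  have hgt : x0 < x2 := by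
    by_contra h
    push_neg at h
    nlinarith [mul_nonneg (sub_nonneg.2 h23.le) (sub_nonneg.2 h)]
  linarith

/-- Key algebraic fact for lines below the face: with touching abscissae `x1`, `x3` of the
outer lines (weakly above `l2` and weakly below the line `l'`), the middle line `l2`
cannot be strictly above `l1`, `l3` and `l'` at a common abscissa `x0`. -/
lemma key3B (a1 b1 a2 b2 a3 b3 a' b' x1 x3 x0 : ℝ)
    (h12 : a1 < a2) (h23 : a2 < a3)
    (H1 : a2*x1+b2 ≤ a1*x1+b1) (H2 : a1*x1+b1 ≤ a'*x1+b')
    (H3 : a2*x3+b2 ≤ a3*x3+b3) (H4 : a3*x3+b3 ≤ a'*x3+b')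
    (H5 : a1*x0+b1 < a2*x0+b2) (H6 : a3*x0+b3 < a2*x0+b2)
    (H7 : a'*x0+b' < a2*x0+b2) : False := by
  have hx1 : x1 < x0 := by
    by_contra h
    push_neg at h
    nlinarith [mul_nonneg (sub_nonneg.2 h12.le) (sub_nonneg.2 h)]
  have hx3 : x0 < x3 := by
    by_contra h
    push_neg at h
    nlinarith [mul_nonneg (sub_nonneg.2 h23.le) (sub_nonneg.2 h)]
  nlinarith [mul_nonneg (by linarith : (0:ℝ) ≤ a'*x1+b' - (a2*x1+b2)) (by linarith : (0:ℝ) ≤ x3 - x0),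
             mul_nonneg (by linarith : (0:ℝ) ≤ a'*x3+b' - (a2*x3+b2)) (by linarith : (0:ℝ) ≤ x0 - x1),
             mul_pos (by linarith : (0:ℝ) < x3 - x1) (by linarith : (0:ℝ) < a2*x0+b2 - (a'*x0+b'))]

/-- If the `n` distinct non-vertical lines of `L` are in general position (no point on
three of them) and every line appears on the common upper envelope (is strictly on top at
some abscissa), then every bounded face of the arrangement is bounded by at most four
lines (it is a triangle or a quadrilateral). -/
theorem stmt16 (L : Finset (ℝ × ℝ))
    (hgen : ∀ p : ℝ × ℝ, throughCount L p ≤ 2)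
    (henv : ∀ ℓ ∈ L, ∃ x : ℝ, ∀ ℓ' ∈ L, ℓ' ≠ ℓ → evalLine ℓ' x < evalLine ℓ x)
    (p : ℝ × ℝ) (hp : ∀ ℓ ∈ L, ¬ OnLine ℓ p)
    (F : Set (ℝ × ℝ))
    (hF : F = connectedComponentIn {q : ℝ × ℝ | ∀ ℓ ∈ L, ¬ OnLine ℓ q} p)
    (hbdd : Bornology.IsBounded F) :
    (L.filter (fun ℓ => ∃ q ∈ closure F, OnLine ℓ q)).card ≤ 4 := by
  classical
  set S : Set (ℝ × ℝ) := {q : ℝ × ℝ | ∀ ℓ ∈ L, ¬ OnLine ℓ q} with hS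
  have hpS : p ∈ S := hp
  have hFS : F ⊆ S := by rw [hF]; exact connectedComponentIn_subset _ _
  have hpF : p ∈ F := by rw [hF]; exact mem_connectedComponentIn hpS
  have hFpre : IsPreconnected F := by rw [hF]; exact isPreconnected_connectedComponentIn
  -- sign of (evalLine ℓ q.1 - q.2) is constant on F
  have hsign : ∀ ℓ ∈ L, ∀ q ∈ F,
      (evalLine ℓ p.1 < p.2 → evalLine ℓ q.1 < q.2) ∧
      (p.2 < evalLine ℓ p.1 → q.2 < evalLine ℓ q.1) := by
    intro ℓ hℓ q hq
    set g : ℝ × ℝ → ℝ := fun r => evalLine ℓ r.1 - r.2 with hg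
    have hgc : ContinuousOn g F := by
      apply Continuous.continuousOn
      simp only [hg, evalLine]
      fun_prop
    have himg : IsPreconnected (g '' F) := hFpre.image g hgc
    have hord := himg.ordConnected
    have hkey : ∀ r ∈ F, g r ≠ 0 := by
      intro r hr h0
      exact hFS hr ℓ hℓ (by simpa [OnLine, hg, sub_eq_zero] using h0)
    constructor
    · intro hpl
      by_contra hcon
      push_neg at hcon
      have hgq : 0 < g q :=
        lt_of_le_of_ne (sub_nonneg.2 hcon) (Ne.symm (hkey q hq))
      have hgp : g p < 0 := sub_neg.2 hpl
      have h0 : (0:ℝ) ∈ g '' F := by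
        apply hord.out ⟨p, hpF, rfl⟩ ⟨q, hq, rfl⟩
        exact ⟨hgp.le, hgq.le⟩
      obtain ⟨r, hr, hr0⟩ := h0
      exact hkey r hr hr0
    · intro hpl
      by_contra hcon
      push_neg at hcon
      have hgq : g q < 0 :=
        lt_of_le_of_ne (sub_nonpos.2 hcon) (hkey q hq)
      have hgp : 0 < g p := sub_pos.2 hpl
      have h0 : (0:ℝ) ∈ g '' F := by
        apply hord.out ⟨q, hq, rfl⟩ ⟨p, hpF, rfl⟩
        exact ⟨hgq.le, hgp.le⟩
      obtain ⟨r, hr, hr0⟩ := h0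
      exact hkey r hr hr0
  -- closed versions on the closure
  have hsideB : ∀ ℓ ∈ L, evalLine ℓ p.1 < p.2 → ∀ q ∈ closure F, evalLine ℓ q.1 ≤ q.2 := by
    intro ℓ hℓ hpl q hq
    have hsub : F ⊆ {r : ℝ × ℝ | evalLine ℓ r.1 - r.2 ≤ 0} := by
      intro r hr
      exact sub_nonpos.2 ((hsign ℓ hℓ r hr).1 hpl).le
    have hcl : IsClosed {r : ℝ × ℝ | evalLine ℓ r.1 - r.2 ≤ 0} := by
      have : Continuous fun r : ℝ × ℝ => evalLine ℓ r.1 - r.2 := by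
        simp only [evalLine]; fun_prop
      exact isClosed_le this continuous_const
    exact sub_nonpos.1 (closure_minimal hsub hcl hq)
  have hsideA : ∀ ℓ ∈ L, p.2 < evalLine ℓ p.1 → ∀ q ∈ closure F, q.2 ≤ evalLine ℓ q.1 := by
    intro ℓ hℓ hpl q hq
    have hsub : F ⊆ {r : ℝ × ℝ | r.2 - evalLine ℓ r.1 ≤ 0} := by
      intro r hr
      exact sub_nonpos.2 ((hsign ℓ hℓ r hr).2 hpl).le
    have hcl : IsClosed {r : ℝ × ℝ | r.2 - evalLine ℓ r.1 ≤ 0} := by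
      have : Continuous fun r : ℝ × ℝ => r.2 - evalLine ℓ r.1 := by
        simp only [evalLine]; fun_prop
      exact isClosed_le this continuous_const
    exact sub_nonpos.1 (closure_minimal hsub hcl hq)
  -- trichotomy for p
  have htri : ∀ ℓ ∈ L, evalLine ℓ p.1 < p.2 ∨ p.2 < evalLine ℓ p.1 := by
    intro ℓ hℓ
    exact lt_or_gt_of_ne fun h => hp ℓ hℓ h
  -- distinct lines of L have distinct slopes
  have hslope : ∀ ℓ ∈ L, ∀ ℓ' ∈ L, ℓ ≠ ℓ' → ℓ.1 ≠ ℓ'.1 := by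
    intro ℓ hℓ ℓ' hℓ' hne heq
    obtain ⟨x, hx⟩ := henv ℓ hℓ
    obtain ⟨x', hx'⟩ := henv ℓ' hℓ'
    have h1 := hx ℓ' hℓ' (Ne.symm hne)
    have h2 := hx' ℓ hℓ hne
    simp only [evalLine, heq] at h1 h2
    linarith
  -- there is a line strictly above p (from boundedness)
  have hAex : ∃ ℓ ∈ L, p.2 < evalLine ℓ p.1 := by
    by_contra hcon
    push_neg at hcon
    have hall : ∀ ℓ ∈ L, evalLine ℓ p.1 < p.2 := by
      intro ℓ hℓ
      rcases htri ℓ hℓ with h | h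
      · exact h
      · exact absurd h (not_lt.2 (hcon ℓ hℓ))
    set R : Set (ℝ × ℝ) := (fun t : ℝ => (p.1, p.2 + t)) '' Set.Ici 0 with hR
    have hRpre : IsPreconnected R := by
      apply IsPreconnected.image isPreconnected_Ici
      exact Continuous.continuousOn (by fun_prop)
    have hRS : R ⊆ S := by
      rintro q ⟨t, ht, rfl⟩ ℓ hℓ hon
      have h1 := hall ℓ hℓ
      have h2 : evalLine ℓ p.1 = p.2 + t := hon
      linarith [Set.mem_Ici.1 ht]
    have hpR : p ∈ R := ⟨0, Set.self_mem_Ici, by simp⟩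
    have hRF : R ⊆ F := by
      rw [hF]
      exact hRpre.subset_connectedComponentIn hpR hRS
    have hRbdd : Bornology.IsBounded R := hbdd.subset hRF
    obtain ⟨C, hC⟩ := isBounded_iff_forall_norm_le.1 hRbdd
    have hmem : (p.1, p.2 + (|C| + |p.2| + 1)) ∈ R :=
      ⟨|C| + |p.2| + 1, Set.mem_Ici.2 (by positivity), rfl⟩
    have h1 := hC _ hmem
    have h2 : |p.2 + (|C| + |p.2| + 1)| ≤ ‖(p.1, p.2 + (|C| + |p.2| + 1))‖ := by
      simpa using norm_snd_le (p.1, p.2 + (|C| + |p.2| + 1))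
    have h3 : |C| + 1 ≤ |p.2 + (|C| + |p.2| + 1)| := by
      have := neg_abs_le p.2
      calc |C| + 1 ≤ p.2 + (|C| + |p.2| + 1) := by
            have := neg_abs_le p.2; linarith [le_abs_self p.2]
        _ ≤ |p.2 + (|C| + |p.2| + 1)| := le_abs_self _
    linarith [le_abs_self C]
  -- the set of touching lines, split by side
  set T : Finset (ℝ × ℝ) := L.filter (fun ℓ => ∃ q ∈ closure F, OnLine ℓ q) with hT
  set TA : Finset (ℝ × ℝ) := T.filter (fun ℓ => p.2 < evalLine ℓ p.1) with hTA
  set TB : Finset (ℝ × ℝ) := T.filter (fun ℓ => evalLine ℓ p.1 < p.2) with hTB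
  have hmemT : ∀ ℓ ∈ T, ℓ ∈ L ∧ ∃ q ∈ closure F, OnLine ℓ q := by
    intro ℓ hℓ
    simpa [hT] using Finset.mem_filter.1 hℓ
  -- at most two lines above the face
  have hcardA : TA.card ≤ 2 := by
    by_contra hcon
    push_neg at hcon
    obtain ⟨l1, l2, l3, h1, h2, h3, h12, h13, h23⟩ := Finset.two_lt_card_iff.1 hcon
    have unpack : ∀ l ∈ TA, l ∈ L ∧ (∃ q ∈ closure F, OnLine l q) ∧ p.2 < evalLine l p.1 := by
      intro l hl
      obtain ⟨hlT, hside⟩ := Finset.mem_filter.1 hl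
      obtain ⟨hlL, hq⟩ := hmemT l hlT
      exact ⟨hlL, hq, hside⟩
    obtain ⟨hL1, hq1, hs1⟩ := unpack l1 h1
    obtain ⟨hL2, hq2, hs2⟩ := unpack l2 h2
    obtain ⟨hL3, hq3, hs3⟩ := unpack l3 h3
    -- the main step, for sorted slopes: m1 outer, m2 middle, m3 outer
    have main : ∀ m1 m2 m3 : ℝ × ℝ, m1 ∈ L → m2 ∈ L → m3 ∈ L →
        (p.2 < evalLine m1 p.1) → (p.2 < evalLine m3 p.1) →
        (∃ q ∈ closure F, OnLine m2 q) →
        m1.1 < m2.1 → m2.1 < m3.1 → False := by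
      intro m1 m2 m3 hm1 hm2 hm3 hup1 hup3 ⟨q, hqF, hqOn⟩ hlt1 hlt2
      have hne1 : m1 ≠ m2 := fun h => absurd (congrArg Prod.fst h) (ne_of_lt hlt1)
      have hne3 : m3 ≠ m2 := fun h => absurd (congrArg Prod.fst h) (ne_of_gt hlt2)
      obtain ⟨x0, hx0⟩ := henv m2 hm2
      have hH3 := hx0 m1 hm1 hne1
      have hH4 := hx0 m3 hm3 hne3
      have hA1 : q.2 ≤ evalLine m1 q.1 := hsideA m1 hm1 hup1 q hqF
      have hA3 : q.2 ≤ evalLine m3 q.1 := hsideA m3 hm3 hup3 q hqF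
      rw [← hqOn] at hA1 hA3
      simp only [evalLine] at hA1 hA3 hH3 hH4
      exact key3A m1.1 m1.2 m2.1 m2.2 m3.1 m3.2 q.1 x0 hlt1 hlt2 hA1 hA3 hH3 hH4
    have d12 := (hslope l1 hL1 l2 hL2 h12).lt_or_gt
    have d13 := (hslope l1 hL1 l3 hL3 h13).lt_or_gt
    have d23 := (hslope l2 hL2 l3 hL3 h23).lt_or_gt
    rcases d12 with ha | ha <;> rcases d13 with hb | hb <;> rcases d23 with hc | hc
    · exact main l1 l2 l3 hL1 hL2 hL3 hs1 hs3 hq2 ha hc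
    · exact main l1 l3 l2 hL1 hL3 hL2 hs1 hs2 hq3 hb hc
    · linarith
    · exact main l3 l1 l2 hL3 hL1 hL2 hs3 hs2 hq1 hb ha
    · exact main l2 l1 l3 hL2 hL1 hL3 hs2 hs3 hq1 ha hb
    · linarith
    · exact main l2 l3 l1 hL2 hL3 hL1 hs2 hs1 hq3 hc hb
    · exact main l3 l2 l1 hL3 hL2 hL1 hs3 hs1 hq2 hc ha
  -- at most two lines below the face
  have hcardB : TB.card ≤ 2 := by
    by_contra hcon
    push_neg at hcon
    obtain ⟨l1, l2, l3, h1, h2, h3, h12, h13, h23⟩ := Finset.two_lt_card_iff.1 hcon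
    have unpack : ∀ l ∈ TB, l ∈ L ∧ (∃ q ∈ closure F, OnLine l q) ∧ evalLine l p.1 < p.2 := by
      intro l hl
      obtain ⟨hlT, hside⟩ := Finset.mem_filter.1 hl
      obtain ⟨hlL, hq⟩ := hmemT l hlT
      exact ⟨hlL, hq, hside⟩
    obtain ⟨hL1, hq1, hs1⟩ := unpack l1 h1
    obtain ⟨hL2, hq2, hs2⟩ := unpack l2 h2
    obtain ⟨hL3, hq3, hs3⟩ := unpack l3 h3
    obtain ⟨l', hl'L, hl'up⟩ := hAex
    have main : ∀ m1 m2 m3 : ℝ × ℝ, m1 ∈ L → m2 ∈ L → m3 ∈ L →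
        (evalLine m2 p.1 < p.2) →
        (∃ q ∈ closure F, OnLine m1 q) → (∃ q ∈ closure F, OnLine m3 q) →
        m1.1 < m2.1 → m2.1 < m3.1 → False := by
      intro m1 m2 m3 hm1 hm2 hm3 hdown2 ⟨q1, hq1F, hq1On⟩ ⟨q3, hq3F, hq3On⟩ hlt1 hlt2
      have hne1 : m1 ≠ m2 := fun h => absurd (congrArg Prod.fst h) (ne_of_lt hlt1)
      have hne3 : m3 ≠ m2 := fun h => absurd (congrArg Prod.fst h) (ne_of_gt hlt2)
      have hne' : l' ≠ m2 := by
        intro h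
        rw [h] at hl'up
        linarith
      obtain ⟨x0, hx0⟩ := henv m2 hm2
      have hH5 := hx0 m1 hm1 hne1
      have hH6 := hx0 m3 hm3 hne3
      have hH7 := hx0 l' hl'L hne'
      -- q1 is weakly above m2 and weakly below l'
      have hB1 : evalLine m2 q1.1 ≤ q1.2 := hsideB m2 hm2 hdown2 q1 hq1F
      have hU1 : q1.2 ≤ evalLine l' q1.1 := hsideA l' hl'L hl'up q1 hq1F
      have hB3 : evalLine m2 q3.1 ≤ q3.2 := hsideB m2 hm2 hdown2 q3 hq3F
      have hU3 : q3.2 ≤ evalLine l' q3.1 := hsideA l' hl'L hl'up q3 hq3F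
      rw [← hq1On] at hB1 hU1
      rw [← hq3On] at hB3 hU3
      simp only [evalLine] at hB1 hU1 hB3 hU3 hH5 hH6 hH7
      exact key3B m1.1 m1.2 m2.1 m2.2 m3.1 m3.2 l'.1 l'.2 q1.1 q3.1 x0
        hlt1 hlt2 hB1 hU1 hB3 hU3 hH5 hH6 hH7
    have d12 := (hslope l1 hL1 l2 hL2 h12).lt_or_gt
    have d13 := (hslope l1 hL1 l3 hL3 h13).lt_or_gt
    have d23 := (hslope l2 hL2 l3 hL3 h23).lt_or_gt
    rcases d12 with ha | ha <;> rcases d13 with hb | hb <;> rcases d23 with hc | hc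
    · exact main l1 l2 l3 hL1 hL2 hL3 hs2 hq1 hq3 ha hc
    · exact main l1 l3 l2 hL1 hL3 hL2 hs3 hq1 hq2 hb hc
    · linarith
    · exact main l3 l1 l2 hL3 hL1 hL2 hs1 hq3 hq2 hb ha
    · exact main l2 l1 l3 hL2 hL1 hL3 hs1 hq2 hq3 ha hb
    · linarith
    · exact main l2 l3 l1 hL2 hL3 hL1 hs3 hq2 hq1 hc hb
    · exact main l3 l2 l1 hL3 hL2 hL1 hs2 hq3 hq1 hc ha
  -- combine
  have hsub : T ⊆ TA ∪ TB := by
    intro ℓ hℓ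
    have hℓL := (hmemT ℓ hℓ).1
    rcases htri ℓ hℓL with h | h
    · exact Finset.mem_union_right _ (Finset.mem_filter.2 ⟨hℓ, h⟩)
    · exact Finset.mem_union_left _ (Finset.mem_filter.2 ⟨hℓ, h⟩)
  calc T.card ≤ (TA ∪ TB).card := Finset.card_le_card hsub
    _ ≤ TA.card + TB.card := Finset.card_union_le _ _
    _ ≤ 4 := by omega

end
end

section
/- Let L be a set of n distinct non-vertical lines, let k ≥ 0, and let C_k denote the lower convex hull of the k-upper level of the arrangement of L (the x-monotone convex curve spanning the vertices of the level from below). Then every point q lying on or above C_k has upper level at most 2k, i.e., at most 2k lines of L pass strictly above q. -/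
open Finset
open scoped Classical

noncomputable section

/-- The final step of the appendix algorithm: `p₁` and `p₂` are points of the `k`-upper
level of the arrangement of `L` (each has at most `k` lines strictly above it, and `k` is
less than the lines above plus the lines through it), spanning an edge of the lower convex
hull `C_k` of the level.  Any point `q` lying on or above this edge (i.e. on or above
`C_k`) has at most `2k` lines of `L` strictly above it. -/
theorem stmt17 (L : Finset (ℝ × ℝ)) (k : ℕ) (p₁ p₂ q : ℝ × ℝ)
    (h₁a : upperCount L p₁ ≤ k) (h₁b : k < upperCount L p₁ + throughCount L p₁)
    (h₂a : upperCount L p₂ ≤ k) (h₂b : k < upperCount L p₂ + throughCount L p₂)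
    (s : ℝ) (hs0 : 0 ≤ s) (hs1 : s ≤ 1)
    (hqx : q.1 = p₁.1 + s * (p₂.1 - p₁.1))
    (hqy : p₁.2 + s * (p₂.2 - p₁.2) ≤ q.2) :
    upperCount L q ≤ 2 * k := by
  have key : L.filter (fun l => Above l q) ⊆
      L.filter (fun l => Above l p₁) ∪ L.filter (fun l => Above l p₂) := by
    intro l hl
    simp only [mem_filter, mem_union] at hl ⊢
    obtain ⟨hlL, hq⟩ := hl
    by_contra h
    push_neg at h
    have h1 : ¬ Above l p₁ := h.1 hlL
    have h2 : ¬ Above l p₂ := h.2 hlL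
    simp only [Above, evalLine, not_lt] at h1 h2 hq
    rw [hqx] at hq
    nlinarith
  calc upperCount L q ≤ (L.filter (fun l => Above l p₁) ∪ L.filter (fun l => Above l p₂)).card :=
        card_le_card key
    _ ≤ upperCount L p₁ + upperCount L p₂ := card_union_le _ _
    _ ≤ 2 * k := by omega
end
end

section
/- Let L be a set of n distinct non-vertical lines whose upper envelope has at least two vertices (contains a bounded edge). Then there exists k₀ ≤ 2·log₂ n such that some vertex of the arrangement of L lies strictly above the k₀-upper level, and the maximum level of any vertex of the arrangement equals n − k₀. -/
open Finset
open scoped Classical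

noncomputable section

/-- A vertex of the upper envelope of `L`. -/
def EnvelopeVertex (L : Finset (ℝ × ℝ)) (hL : L.Nonempty) (p : ℝ × ℝ) : Prop :=
  p.2 = envVal L hL p.1 ∧ 2 ≤ throughCount L p

/-!
Let `k₀` be the least number of lines through or above a vertex of the arrangement. Since the
lines through, above and below a vertex partition `L`, the maximal level of a vertex is `n - k₀`.

For the bound, suppose every vertex has more than `K = ⌊log₂ n²⌋` lines through or above it, and
let `V k` be the set of vertices with at most `k` lines strictly above them. For `k ≤ K` no two
points of `V k` lie on a common vertical line, and between any two of them there is a point of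
`V (k + 1)`: otherwise both the `k`-level and the `(k + 1)`-level would run along a single line
between them, necessarily the same line, and where two levels meet at least two lines cross.
Hence `#V (k + 1) ≥ 2 #V k - 1`, and from the two envelope vertices in `V 0` we get
`#V K ≥ 2 ^ K + 1 > n (n - 1) / 2`, more than the number of vertices of the arrangement.
-/

open Filter Topology

lemma evalLine_sub_evalLine (l : ℝ × ℝ) (x y : ℝ) :
    evalLine l x - evalLine l y = l.1 * (x - y) := by
  simp only [evalLine]; ring

lemma eq_of_onLine_of_onLine {l l' v v' : ℝ × ℝ} (hvv' : v.1 ≠ v'.1) (hlv : OnLine l v)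
    (hlv' : OnLine l v') (hl'v : OnLine l' v) (hl'v' : OnLine l' v') : l = l' := by
  simp only [OnLine, evalLine] at hlv hlv' hl'v hl'v'
  have hslope : l.1 = l'.1 := by
    have h : (l.1 - l'.1) * (v.1 - v'.1) = 0 := by
      linear_combination hlv - hlv' - hl'v + hl'v'
    exact sub_eq_zero.1 ((mul_eq_zero.1 h).resolve_right (sub_ne_zero.2 hvv'))
  exact Prod.ext hslope (by linear_combination hlv - hl'v - v.1 * hslope)

lemma eq_of_onLine_of_ne {l l' v v' : ℝ × ℝ} (hll' : l ≠ l') (hlv : OnLine l v)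
    (hlv' : OnLine l v') (hl'v : OnLine l' v) (hl'v' : OnLine l' v') : v = v' := by
  by_cases hx : v.1 = v'.1
  · rw [OnLine] at hlv hlv'
    exact Prod.ext hx (by rw [← hlv, ← hlv', hx])
  · exact absurd (eq_of_onLine_of_onLine hx hlv hlv' hl'v hl'v') hll'

lemma card_filter_le_evalLine (L : Finset (ℝ × ℝ)) (p : ℝ × ℝ) :
    #(L.filter fun l => p.2 ≤ evalLine l p.1) = upperCount L p + throughCount L p := by
  have hdisj : Disjoint (L.filter fun l => Above l p) (L.filter fun l => OnLine l p) :=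
    disjoint_filter.2 fun l _ hA hO => (ne_of_lt hA) hO.symm
  rw [upperCount, throughCount, ← card_union_of_disjoint hdisj, ← filter_or]
  congr 1
  exact filter_congr fun l _ => by rw [Above, OnLine, le_iff_lt_or_eq, eq_comm]

lemma upperCount_add_throughCount_add_levelCount (L : Finset (ℝ × ℝ)) (p : ℝ × ℝ) :
    upperCount L p + throughCount L p + levelCount L p = L.card := by
  rw [← card_filter_le_evalLine, levelCount,
    ← card_filter_add_card_filter_not (s := L) (fun l => p.2 ≤ evalLine l p.1)]
  congr 2
  exact filter_congr fun l _ => by rw [Below, not_le]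

lemma upperCount_add_throughCount_le_upperCount {L : Finset (ℝ × ℝ)} {v w : ℝ × ℝ}
    (hx : v.1 = w.1) (hy : w.2 < v.2) :
    upperCount L v + throughCount L v ≤ upperCount L w := by
  rw [← card_filter_le_evalLine, upperCount]
  refine card_le_card fun l hl => ?_
  rw [mem_filter] at hl ⊢
  exact ⟨hl.1, by rw [Above, ← hx]; exact hy.trans_le hl.2⟩

lemma upperCount_eq_zero_of_envelopeVertex {L : Finset (ℝ × ℝ)} {hL : L.Nonempty}
    {p : ℝ × ℝ} (hp : EnvelopeVertex L hL p) : upperCount L p = 0 := by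
  rw [upperCount, card_eq_zero, filter_eq_empty_iff]
  intro l hl
  rw [Above, not_lt, hp.1, envVal]
  exact le_sup' (fun l => evalLine l p.1) hl

lemma exists_card_filter_lt_le_lt_card_filter_le {ι α : Type*} [LinearOrder α] (f : ι → α)
    (s : Finset ι) : ∀ k < #s, ∃ y, #(s.filter (y < f ·)) ≤ k ∧ k < #(s.filter (y ≤ f ·)) := by
  induction s using Finset.induction_on_max_value f with
  | empty => simp
  | insert a s ha hmax ih =>
    rintro (_ | k) hk
    · refine ⟨f a, le_of_eq (card_eq_zero.2 (filter_eq_empty_iff.2 fun x hx => ?_)), ?_⟩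
      · rcases mem_insert.1 hx with rfl | hx
        exacts [lt_irrefl _, not_lt.2 (hmax x hx)]
      · exact card_pos.2 ⟨a, mem_filter.2 ⟨mem_insert_self a s, le_rfl⟩⟩
    · rw [card_insert_of_notMem ha] at hk
      obtain ⟨y, h₁, h₂⟩ := ih k (by omega)
      obtain ⟨x, hx⟩ := card_pos.1 (k.zero_le.trans_lt h₂)
      have hya : y ≤ f a := (mem_filter.1 hx).2.trans (hmax x (mem_filter.1 hx).1)
      have ha' : a ∉ s.filter (y ≤ f ·) := fun h => ha (mem_filter.1 h).1
      refine ⟨y, ?_, ?_⟩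
      · rw [filter_insert]
        split_ifs
        · exact (card_insert_le _ _).trans (by omega)
        · omega
      · rw [filter_insert, if_pos hya, card_insert_of_notMem ha']
        omega

theorem IsPreconnected.eqOn_closure_of_eventuallyEq {X Y : Type*} [TopologicalSpace X]
    [TopologicalSpace Y] [T2Space Y] {s : Set X} {f g : X → Y} (hs : IsPreconnected s)
    (hf : Continuous f) (hg : Continuous g) {x₀ : X} (hx₀ : x₀ ∈ s) (h₀ : f x₀ = g x₀)
    (hloc : ∀ x ∈ s, f x = g x → f =ᶠ[𝓝 x] g) : Set.EqOn f g (closure s) := by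
  have hu : s ⊆ {x | f =ᶠ[𝓝 x] g} := by
    refine hs.subset_of_closure_inter_subset isOpen_setOfPred_eventually_nhds
      ⟨x₀, hx₀, hloc x₀ hx₀ h₀⟩ fun x ⟨hx, hxs⟩ => hloc x hxs ?_
    exact closure_minimal (fun _ hy => hy.eq_of_nhds) (isClosed_eq hf hg) hx
  exact Set.EqOn.closure (fun x hx => (hu hx).eq_of_nhds) hf hg

/-- The `k`-upper level of `L`, as the graph of a function of the abscissa. -/
def kLevel (L : Finset (ℝ × ℝ)) (k : ℕ) (x : ℝ) : ℝ :=
  sInf {y | upperCount L (x, y) ≤ k}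

section kLevel

variable {L : Finset (ℝ × ℝ)} {k : ℕ}

lemma kLevel_eq {p : ℝ × ℝ} (h₁ : upperCount L p ≤ k)
    (h₂ : k < upperCount L p + throughCount L p) : kLevel L k p.1 = p.2 := by
  refine IsLeast.csInf_eq ⟨h₁, fun z (hz : upperCount L (p.1, z) ≤ k) => not_lt.1 fun hzp => ?_⟩
  have := upperCount_add_throughCount_le_upperCount (L := L) (v := p) (w := (p.1, z)) rfl hzp
  omega

lemma kLevel_spec (hk : k < L.card) (x : ℝ) :
    upperCount L (x, kLevel L k x) ≤ k ∧
      k < upperCount L (x, kLevel L k x) + throughCount L (x, kLevel L k x) := by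
  obtain ⟨y, h₁, h₂⟩ := exists_card_filter_lt_le_lt_card_filter_le (evalLine · x) L k hk
  rw [card_filter_le_evalLine L (x, y)] at h₂
  rw [kLevel_eq (p := (x, y)) h₁ h₂]
  exact ⟨h₁, h₂⟩

lemma le_kLevel (hk : k < L.card) {p : ℝ × ℝ}
    (hp : k < upperCount L p + throughCount L p) : p.2 ≤ kLevel L k p.1 := by
  by_contra! h
  have := upperCount_add_throughCount_le_upperCount (L := L) (v := p)
    (w := (p.1, kLevel L k p.1)) rfl h
  have := (kLevel_spec hk p.1).1
  omega

lemma kLevel_le_kLevel_add (hk : k < L.card) {M : ℝ} (hM : ∀ l ∈ L, |l.1| ≤ M) (a b : ℝ) :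
    kLevel L k a ≤ kLevel L k b + M * dist a b := by
  rw [← sub_le_iff_le_add]
  refine le_kLevel hk (p := (b, _)) ?_
  have h := (kLevel_spec hk a).2
  rw [← card_filter_le_evalLine] at h ⊢
  refine h.trans_le (card_le_card fun l hl => ?_)
  rw [mem_filter] at hl ⊢
  refine ⟨hl.1, ?_⟩
  have : |evalLine l a - evalLine l b| ≤ M * dist a b := by
    rw [evalLine_sub_evalLine, abs_mul, Real.dist_eq]
    exact mul_le_mul_of_nonneg_right (hM l hl.1) (abs_nonneg _)
  linarith [le_abs_self (evalLine l a - evalLine l b), hl.2]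

lemma continuous_kLevel (hk : k < L.card) : Continuous (kLevel L k) :=
  (LipschitzWith.of_le_add_mul' (∑ l ∈ L, |l.1|) fun a b => kLevel_le_kLevel_add hk
    (fun _ hl => single_le_sum (f := fun m => |m.1|) (fun m _ => abs_nonneg m.1) hl) a b).continuous

lemma eventually_kLevel_eq_evalLine (hk : k < L.card) {l : ℝ × ℝ} (hl : l ∈ L) {x₀ : ℝ}
    (hon : OnLine l (x₀, kLevel L k x₀)) (hsimple : throughCount L (x₀, kLevel L k x₀) ≤ 1) :
    kLevel L k =ᶠ[𝓝 x₀] evalLine l := by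
  have huniq : ∀ m ∈ L, OnLine m (x₀, kLevel L k x₀) → m = l := fun m hm hmon =>
    card_le_one.1 hsimple m (mem_filter.2 ⟨hm, hmon⟩) l (mem_filter.2 ⟨hl, hon⟩)
  -- near `x₀` every other line of `L` stays strictly on the same side of `l`
  have hside : ∀ m ∈ L, ∀ᶠ z in 𝓝 x₀, m = l ∨
      (evalLine l x₀ < evalLine m x₀ ∧ evalLine l z < evalLine m z) ∨
      (evalLine m x₀ < evalLine l x₀ ∧ evalLine m z < evalLine l z) := by
    intro m hm
    have hcl := (continuous_evalLine l).continuousAt (x := x₀)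
    have hcm := (continuous_evalLine m).continuousAt (x := x₀)
    rcases lt_trichotomy (evalLine l x₀) (evalLine m x₀) with h | h | h
    · exact (hcl.eventually_lt hcm h).mono fun z hz => Or.inr (Or.inl ⟨h, hz⟩)
    · exact Eventually.of_forall fun _ => Or.inl (huniq m hm (by rw [OnLine, ← h]; exact hon))
    · exact (hcm.eventually_lt hcl h).mono fun z hz => Or.inr (Or.inr ⟨h, hz⟩)
  have hon' : evalLine l x₀ = kLevel L k x₀ := hon
  filter_upwards [(eventually_all_finset L).2 hside] with z hz
  have hsame : ∀ m ∈ L, (evalLine l z < evalLine m z ↔ evalLine l x₀ < evalLine m x₀) ∧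
      (evalLine m z = evalLine l z ↔ evalLine m x₀ = evalLine l x₀) := by
    intro m hm
    rcases hz m hm with rfl | ⟨h₀, h⟩ | ⟨h₀, h⟩
    · simp
    · exact ⟨iff_of_true h h₀, iff_of_false h.ne' h₀.ne'⟩
    · exact ⟨iff_of_false (lt_asymm h) (lt_asymm h₀), iff_of_false h.ne h₀.ne⟩
  have hAbove : upperCount L (z, evalLine l z) = upperCount L (x₀, kLevel L k x₀) := by
    refine congrArg card (filter_congr fun m hm => ?_)
    show evalLine l z < evalLine m z ↔ kLevel L k x₀ < evalLine m x₀
    rw [← hon']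
    exact (hsame m hm).1
  have hThrough : throughCount L (z, evalLine l z) = throughCount L (x₀, kLevel L k x₀) := by
    refine congrArg card (filter_congr fun m hm => ?_)
    show evalLine m z = evalLine l z ↔ evalLine m x₀ = kLevel L k x₀
    rw [← hon']
    exact (hsame m hm).2
  have := kLevel_spec hk x₀
  exact kLevel_eq (p := (z, evalLine l z)) (by omega) (by omega)

lemma exists_eqOn_kLevel_evalLine (hk : k < L.card) {a b : ℝ} (hab : a < b)
    (hsimple : ∀ x ∈ Set.Ioo a b, throughCount L (x, kLevel L k x) ≤ 1) :
    ∃ l ∈ L, Set.EqOn (kLevel L k) (evalLine l) (Set.Icc a b) := by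
  obtain ⟨x₀, hx₀⟩ := exists_between hab
  have hpos : 0 < throughCount L (x₀, kLevel L k x₀) := by
    have := kLevel_spec hk x₀
    omega
  obtain ⟨l, hl⟩ := card_pos.1 hpos
  rw [mem_filter] at hl
  refine ⟨l, hl.1, ?_⟩
  rw [← closure_Ioo hab.ne]
  exact isPreconnected_Ioo.eqOn_closure_of_eventuallyEq (continuous_kLevel hk)
    (continuous_evalLine l) hx₀ hl.2.symm fun x hx hfx =>
      eventually_kLevel_eq_evalLine hk hl.1 hfx.symm (hsimple x hx)

lemma exists_vertex_between {v v' : ℝ × ℝ} (hv : upperCount L v ≤ k)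
    (hv₂ : k + 2 ≤ upperCount L v + throughCount L v) (hv' : upperCount L v' ≤ k)
    (hv'₂ : k + 2 ≤ upperCount L v' + throughCount L v') (hlt : v.1 < v'.1) :
    ∃ w, 2 ≤ throughCount L w ∧ upperCount L w ≤ k + 1 ∧ w.1 ∈ Set.Ioo v.1 v'.1 := by
  have hk : k + 1 < L.card := by
    have := upperCount_add_throughCount_add_levelCount L v
    omega
  by_contra hno
  have hsimple : ∀ j ≤ k + 1, ∀ x ∈ Set.Ioo v.1 v'.1, throughCount L (x, kLevel L j x) ≤ 1 := by
    intro j hj x hx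
    by_contra! h₂
    exact hno ⟨_, h₂, (kLevel_spec (L := L) (by omega) x).1.trans hj, hx⟩
  have hline : ∀ j, k ≤ j → j ≤ k + 1 → ∃ l ∈ L,
      Set.EqOn (kLevel L j) (evalLine l) (Set.Icc v.1 v'.1) ∧ OnLine l v ∧ OnLine l v' := by
    intro j hkj hj
    obtain ⟨l, hl, heq⟩ := exists_eqOn_kLevel_evalLine (by omega) hlt (hsimple j hj)
    refine ⟨l, hl, heq, ?_, ?_⟩
    · rw [OnLine, ← heq (Set.left_mem_Icc.2 hlt.le), kLevel_eq (hv.trans hkj) (by omega)]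
    · rw [OnLine, ← heq (Set.right_mem_Icc.2 hlt.le), kLevel_eq (hv'.trans hkj) (by omega)]
  obtain ⟨l, -, hl, hlv, hlv'⟩ := hline k le_rfl k.le_succ
  obtain ⟨l', -, hl', hl'v, hl'v'⟩ := hline (k + 1) k.le_succ le_rfl
  obtain rfl := eq_of_onLine_of_onLine hlt.ne hlv hlv' hl'v hl'v'
  obtain ⟨x, hx⟩ := exists_between hlt
  -- both levels run along the same line, so they meet above `x`, where two lines must cross
  have hmeet : kLevel L (k + 1) x = kLevel L k x := by
    rw [hl' (Set.Ioo_subset_Icc_self hx), hl (Set.Ioo_subset_Icc_self hx)]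
  have h₁ := (kLevel_spec (L := L) (k := k) (by omega) x).1
  have h₂ := (kLevel_spec hk x).2
  have h₃ := hsimple k k.le_succ x hx
  rw [hmeet] at h₂
  omega

end kLevel

lemma two_mul_card_le_card_add_one_of_exists_between {α : Type*} [LinearOrder α]
    {X Y : Finset α} (hXY : X ⊆ Y) (hgap : ∀ a ∈ X, ∀ b ∈ X, a < b → ∃ y ∈ Y, a < y ∧ y < b) :
    2 * #X ≤ #Y + 1 := by
  induction X using Finset.induction_on_max generalizing Y with
  | empty => simp
  | insert m X hlt ih =>
    rw [card_insert_of_notMem fun h => lt_irrefl m (hlt m h)]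
    rcases X.eq_empty_or_nonempty with rfl | hX
    · have := card_pos.2 ⟨m, hXY (mem_insert_self m ∅)⟩
      simp only [card_empty]
      omega
    obtain ⟨y, hyY, hmy, hym⟩ := hgap _ (mem_insert_of_mem (X.max'_mem hX)) m
      (mem_insert_self m X) (hlt _ (X.max'_mem hX))
    have hbelow : ∀ x ∈ X, x < y := fun x hx => (X.le_max' x hx).trans_lt hmy
    have ih' := ih (Y := Y.filter (· < y))
      (fun x hx => mem_filter.2 ⟨hXY (mem_insert_of_mem hx), hbelow x hx⟩)
      fun a ha b hb hab => by
        obtain ⟨z, hz, haz, hzb⟩ := hgap a (mem_insert_of_mem ha) b (mem_insert_of_mem hb) hab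
        exact ⟨z, mem_filter.2 ⟨hz, hzb.trans (hbelow b hb)⟩, haz, hzb⟩
    have hsub : insert m (insert y (Y.filter (· < y))) ⊆ Y :=
      insert_subset (hXY (mem_insert_self m X)) (insert_subset hyY (filter_subset _ _))
    have hy : y ∉ Y.filter (· < y) := fun h => lt_irrefl y (mem_filter.1 h).2
    have hm : m ∉ insert y (Y.filter (· < y)) := by
      rw [mem_insert, mem_filter]
      rintro (rfl | ⟨-, h⟩)
      exacts [lt_irrefl _ hym, lt_asymm hym h]
    have := card_le_card hsub
    rw [card_insert_of_notMem hm, card_insert_of_notMem hy] at this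
    omega

lemma exists_mapsTo_injOn_powersetCard_two (L : Finset (ℝ × ℝ)) :
    ∃ f : ℝ × ℝ → Finset (ℝ × ℝ), Set.MapsTo f {w | 2 ≤ throughCount L w} (L.powersetCard 2) ∧
      Set.InjOn f {w | 2 ≤ throughCount L w} := by
  have : ∀ w ∈ {w | 2 ≤ throughCount L w}, ∃ T ⊆ L.filter (OnLine · w), #T = 2 :=
    fun w hw => exists_subset_card_eq hw
  choose! f hfsub hfcard using this
  refine ⟨f, fun w hw => mem_powersetCard.2 ⟨(hfsub w hw).trans (filter_subset _ _),
    hfcard w hw⟩, fun w hw w' hw' hff => ?_⟩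
  have hon : ∀ l ∈ f w, OnLine l w ∧ OnLine l w' := fun l hl =>
    ⟨(mem_filter.1 (hfsub w hw hl)).2, (mem_filter.1 (hfsub w' hw' (hff ▸ hl))).2⟩
  obtain ⟨a, b, hab, hT⟩ := card_eq_two.1 (hfcard w hw)
  have ha := hon a (by simp [hT])
  have hb := hon b (by simp [hT])
  exact eq_of_onLine_of_ne hab ha.1 ha.2 hb.1 hb.2

lemma finite_setOf_two_le_throughCount (L : Finset (ℝ × ℝ)) :
    {w | 2 ≤ throughCount L w}.Finite :=
  let ⟨_, hmaps, hinj⟩ := exists_mapsTo_injOn_powersetCard_two L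
  Set.Finite.of_injOn hmaps hinj (L.powersetCard 2).finite_toSet

def vertices (L : Finset (ℝ × ℝ)) : Finset (ℝ × ℝ) :=
  (finite_setOf_two_le_throughCount L).toFinset

lemma mem_vertices {L : Finset (ℝ × ℝ)} {w : ℝ × ℝ} : w ∈ vertices L ↔ 2 ≤ throughCount L w :=
  Set.Finite.mem_toFinset _

lemma card_vertices_le (L : Finset (ℝ × ℝ)) : #(vertices L) ≤ L.card.choose 2 := by
  obtain ⟨f, hmaps, hinj⟩ := exists_mapsTo_injOn_powersetCard_two L
  rw [← card_powersetCard]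
  exact card_le_card_of_injOn f (fun w hw => hmaps (mem_vertices.1 hw))
    fun w hw w' hw' => hinj (mem_vertices.1 hw) (mem_vertices.1 hw')

def upperVertices (L : Finset (ℝ × ℝ)) (k : ℕ) : Finset (ℝ × ℝ) :=
  (vertices L).filter fun w => upperCount L w ≤ k

lemma mem_upperVertices {L : Finset (ℝ × ℝ)} {k : ℕ} {w : ℝ × ℝ} :
    w ∈ upperVertices L k ↔ 2 ≤ throughCount L w ∧ upperCount L w ≤ k := by
  rw [upperVertices, mem_filter, mem_vertices]

section upperVertices

variable {L : Finset (ℝ × ℝ)} {k : ℕ}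

lemma injOn_fst_upperVertices
    (hall : ∀ w, 2 ≤ throughCount L w → k < upperCount L w + throughCount L w) :
    Set.InjOn Prod.fst (upperVertices L k : Set (ℝ × ℝ)) := by
  intro v hv w hw hvw
  rw [mem_coe, mem_upperVertices] at hv hw
  by_contra hne
  rcases lt_or_gt_of_ne fun h => hne (Prod.ext hvw h) with h | h
  · have := upperCount_add_throughCount_le_upperCount (L := L) hvw.symm h
    have := hall w hw.1
    omega
  · have := upperCount_add_throughCount_le_upperCount (L := L) hvw h
    have := hall v hv.1
    omega

lemma two_mul_card_upperVertices_le
    (hall : ∀ w, 2 ≤ throughCount L w → k + 2 ≤ upperCount L w + throughCount L w) :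
    2 * #(upperVertices L k) ≤ #(upperVertices L (k + 1)) + 1 := by
  have hinj : ∀ j ≤ k + 1, Set.InjOn Prod.fst (upperVertices L j : Set (ℝ × ℝ)) :=
    fun j hj => injOn_fst_upperVertices fun w hw => by have := hall w hw; omega
  rw [← card_image_of_injOn (hinj k k.le_succ), ← card_image_of_injOn (hinj (k + 1) le_rfl)]
  refine two_mul_card_le_card_add_one_of_exists_between
    (image_subset_image fun w hw => ?_) ?_
  · rw [mem_upperVertices] at hw ⊢
    exact ⟨hw.1, hw.2.trans k.le_succ⟩
  · simp only [mem_image, forall_exists_index, and_imp]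
    rintro _ v hv rfl _ v' hv' rfl hlt
    rw [mem_upperVertices] at hv hv'
    obtain ⟨w, hw, hwu, hwx⟩ := exists_vertex_between hv.2 (hall v hv.1) hv'.2 (hall v' hv'.1) hlt
    exact ⟨w.1, ⟨w, mem_upperVertices.2 ⟨hw, hwu⟩, rfl⟩, hwx⟩

end upperVertices

theorem exists_vertex_upperCount_add_throughCount_le_log {L : Finset (ℝ × ℝ)} {hL : L.Nonempty}
    (henv : ∃ p q : ℝ × ℝ, p ≠ q ∧ EnvelopeVertex L hL p ∧ EnvelopeVertex L hL q) :
    ∃ v, 2 ≤ throughCount L v ∧ upperCount L v + throughCount L v ≤ Nat.log 2 (L.card ^ 2) := by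
  set K := Nat.log 2 (L.card ^ 2)
  by_contra! hall
  obtain ⟨p, q, hpq, hp, hq⟩ := henv
  have hmem : ∀ r, EnvelopeVertex L hL r → r ∈ upperVertices L 0 := fun r hr =>
    mem_upperVertices.2 ⟨hr.2, (upperCount_eq_zero_of_envelopeVertex hr).le⟩
  have hgrow : ∀ k ≤ K, 2 ^ k + 1 ≤ #(upperVertices L k) := by
    intro k
    induction k with
    | zero => exact fun _ => one_lt_card.2 ⟨p, hmem p hp, q, hmem q hq, hpq⟩
    | succ k ih =>
      intro hk
      have := two_mul_card_upperVertices_le (L := L) (k := k) fun w hw => by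
        have := hall w hw
        omega
      have := ih (by omega)
      rw [pow_succ]
      omega
  have hK := (hgrow K le_rfl).trans ((card_le_card (filter_subset _ _)).trans (card_vertices_le L))
  have hchoose : 2 * L.card.choose 2 ≤ L.card ^ 2 := by
    rw [Nat.choose_two_right, sq]
    exact (Nat.mul_div_le _ _).trans (Nat.mul_le_mul_left _ (Nat.sub_le _ _))
  have hlog : L.card ^ 2 < 2 ^ K * 2 := pow_succ 2 K ▸ Nat.lt_pow_succ_log_self one_lt_two _
  omega

lemma natLog_two_sq_le (n : ℕ) : (Nat.log 2 (n ^ 2) : ℝ) ≤ 2 * Real.logb 2 n := by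
  calc (Nat.log 2 (n ^ 2) : ℝ) ≤ Real.logb 2 ((n ^ 2 : ℕ) : ℝ) := Real.natLog_le_logb _ _
    _ = 2 * Real.logb 2 n := by push_cast; rw [Real.logb_pow]; norm_num

theorem stmt19_general (L : Finset (ℝ × ℝ)) (n : ℕ) (hn : L.card = n)
    (hL : L.Nonempty)
    (henv : ∃ p q : ℝ × ℝ, p ≠ q ∧ EnvelopeVertex L hL p ∧ EnvelopeVertex L hL q) :
    ∃ k₀ : ℕ, (k₀ : ℝ) ≤ 2 * Real.logb 2 n ∧
      (∃ v : ℝ × ℝ, 2 ≤ throughCount L v ∧ upperCount L v + throughCount L v ≤ k₀) ∧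
      (∃ v : ℝ × ℝ, 2 ≤ throughCount L v ∧ levelCount L v = n - k₀) ∧
      (∀ w : ℝ × ℝ, 2 ≤ throughCount L w → levelCount L w ≤ n - k₀) := by
  subst hn
  obtain ⟨v, hv, hvK⟩ := exists_vertex_upperCount_add_throughCount_le_log henv
  have hP : ∃ k, ∃ v, 2 ≤ throughCount L v ∧ upperCount L v + throughCount L v ≤ k :=
    ⟨_, v, hv, le_rfl⟩
  obtain ⟨v₀, hv₀, hv₀k⟩ := Nat.find_spec hP
  have hmin : ∀ w, 2 ≤ throughCount L w → Nat.find hP ≤ upperCount L w + throughCount L w :=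
    fun w hw => Nat.find_min' hP ⟨w, hw, le_rfl⟩
  refine ⟨Nat.find hP, ?_, ⟨v₀, hv₀, hv₀k⟩, ⟨v₀, hv₀, ?_⟩, fun w hw => ?_⟩
  · exact (Nat.cast_le.2 ((hmin v hv).trans hvK)).trans (natLog_two_sq_le _)
  · have := hmin v₀ hv₀
    have := upperCount_add_throughCount_add_levelCount L v₀
    omega
  · have := hmin w hw
    have := upperCount_add_throughCount_add_levelCount L w
    omega

/-- Combination of Theorem 1.1 and Lemma 2.1: if the upper envelope of `L` has at least
two vertices, then there is `k₀ ≤ 2·log₂ n` such that some vertex of the arrangement lies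
strictly above the `k₀`-upper level (i.e. the lines through or above it number at most
`k₀`), and the maximum level of a vertex of the arrangement equals `n - k₀`. -/
theorem stmt19 (L : Finset (ℝ × ℝ)) (n : ℕ) (hn : L.card = n) (hn2 : 2 ≤ n)
    (hL : L.Nonempty)
    (henv : ∃ p q : ℝ × ℝ, p ≠ q ∧ EnvelopeVertex L hL p ∧ EnvelopeVertex L hL q) :
    ∃ k₀ : ℕ, (k₀ : ℝ) ≤ 2 * Real.logb 2 n ∧
      (∃ v : ℝ × ℝ, 2 ≤ throughCount L v ∧ upperCount L v + throughCount L v ≤ k₀) ∧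
      (∃ v : ℝ × ℝ, 2 ≤ throughCount L v ∧ levelCount L v = n - k₀) ∧
      (∀ w : ℝ × ℝ, 2 ≤ throughCount L w → levelCount L w ≤ n - k₀) :=
  stmt19_general L n hn hL henv
end
end
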